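/- arXiv:0805.3432 — 2 statements merged into one kernel-verified Lean document; each statement's English description precedes it below -/
import Mathlib

section
/- Let H be a bialgebra and M, N, P objects of LR(H). The maps c_{M,N}(m ⊗ n) = m^{(-1)}·n^{<0>} ⊗ m^{(0)}·n^{<1>} satisfy the hexagon identity c_{M, N⊗P} = (id_N ⊗ c_{M,P}) ∘ (c_{M,N} ⊗ id_P), where N ⊗ P carries the codiagonal coactions and diagonal actions of LR(H). -/
open TensorProduct
noncomputable section
namespace LRPaper
variable (k : Type*) [CommRing k]

def tt (A B C E : Type*) [AddCommGroup A] [Module k A] [AddCommGroup B] [Module k B]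
    [AddCommGroup C] [Module k C] [AddCommGroup E] [Module k E] :
    (A ⊗[k] B) ⊗[k] (C ⊗[k] E) →ₗ[k] (A ⊗[k] C) ⊗[k] (B ⊗[k] E) :=
  (TensorProduct.tensorTensorTensorComm k A B C E).toLinearMap

def asl (A B C : Type*) [AddCommGroup A] [Module k A] [AddCommGroup B] [Module k B]
    [AddCommGroup C] [Module k C] :
    (A ⊗[k] B) ⊗[k] C →ₗ[k] A ⊗[k] (B ⊗[k] C) :=
  (TensorProduct.assoc k A B C).toLinearMap

def asr (A B C : Type*) [AddCommGroup A] [Module k A] [AddCommGroup B] [Module k B]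
    [AddCommGroup C] [Module k C] :
    A ⊗[k] (B ⊗[k] C) →ₗ[k] (A ⊗[k] B) ⊗[k] C :=
  (TensorProduct.assoc k A B C).symm.toLinearMap

def sw (A B : Type*) [AddCommGroup A] [Module k A] [AddCommGroup B] [Module k B] :
    A ⊗[k] B →ₗ[k] B ⊗[k] A :=
  (TensorProduct.comm k A B).toLinearMap


/-- `middle f` applies `f` to the two middle tensor factors. -/
def middle {A B C E B' C' : Type*} [AddCommGroup A] [Module k A] [AddCommGroup B] [Module k B]
    [AddCommGroup C] [Module k C] [AddCommGroup E] [Module k E]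
    [AddCommGroup B'] [Module k B'] [AddCommGroup C'] [Module k C']
    (f : B ⊗[k] C →ₗ[k] B' ⊗[k] C') :
    (A ⊗[k] B) ⊗[k] (C ⊗[k] E) →ₗ[k] (A ⊗[k] B') ⊗[k] (C' ⊗[k] E) :=
  asl k (A ⊗[k] B') C' E
    ∘ₗ TensorProduct.map
        (asr k A B' C' ∘ₗ TensorProduct.map LinearMap.id f ∘ₗ asl k A B C) LinearMap.id
    ∘ₗ asr k (A ⊗[k] B) C E

section Conditions
variable (H : Type*) [Ring H] [Bialgebra k H]
variable {M N : Type*} [AddCommGroup M] [Module k M] [AddCommGroup N] [Module k N]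

/-- counit of `H` -/
def εH : H →ₗ[k] k := Coalgebra.counit
/-- comultiplication of `H` -/
def δH : H →ₗ[k] H ⊗[k] H := Coalgebra.comul
/-- multiplication of `H` -/
def μH : H ⊗[k] H →ₗ[k] H := LinearMap.mul' k H

def IsLeftModule (aL : H ⊗[k] M →ₗ[k] M) : Prop :=
  (∀ m : M, aL (1 ⊗ₜ m) = m) ∧
  ∀ (h h' : H) (m : M), aL ((h * h') ⊗ₜ m) = aL (h ⊗ₜ aL (h' ⊗ₜ m))

def IsRightModule (aR : M ⊗[k] H →ₗ[k] M) : Prop :=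
  (∀ m : M, aR (m ⊗ₜ 1) = m) ∧
  ∀ (m : M) (h h' : H), aR (m ⊗ₜ (h * h')) = aR (aR (m ⊗ₜ h) ⊗ₜ h')

def IsBimodule (aL : H ⊗[k] M →ₗ[k] M) (aR : M ⊗[k] H →ₗ[k] M) : Prop :=
  IsLeftModule k H aL ∧ IsRightModule k H aR ∧
  ∀ (h : H) (m : M) (h' : H), aR (aL (h ⊗ₜ m) ⊗ₜ h') = aL (h ⊗ₜ aR (m ⊗ₜ h'))

def IsLeftComodule (cL : M →ₗ[k] H ⊗[k] M) : Prop :=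
  (∀ m : M, TensorProduct.lid k M (TensorProduct.map (εH k H) LinearMap.id (cL m)) = m) ∧
  ∀ m : M, TensorProduct.map LinearMap.id cL (cL m)
    = TensorProduct.assoc k H H M (TensorProduct.map (δH k H) LinearMap.id (cL m))

def IsRightComodule (cR : M →ₗ[k] M ⊗[k] H) : Prop :=
  (∀ m : M, TensorProduct.rid k M (TensorProduct.map LinearMap.id (εH k H) (cR m)) = m) ∧
  ∀ m : M, TensorProduct.map cR LinearMap.id (cR m)
    = (TensorProduct.assoc k M H H).symm (TensorProduct.map LinearMap.id (δH k H) (cR m))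

def IsBicomodule (cL : M →ₗ[k] H ⊗[k] M) (cR : M →ₗ[k] M ⊗[k] H) : Prop :=
  IsLeftComodule k H cL ∧ IsRightComodule k H cR ∧
  ∀ m : M, TensorProduct.map LinearMap.id cR (cL m)
    = TensorProduct.assoc k H M H (TensorProduct.map cL LinearMap.id (cR m))

/-- `(h₁⊗h₂)⊗m ↦ (h₁·m)⁽⁻¹⁾h₂ ⊗ (h₁·m)⁽⁰⁾` -/
def ydlL (aL : H ⊗[k] M →ₗ[k] M) (cL : M →ₗ[k] H ⊗[k] M) :
    (H ⊗[k] H) ⊗[k] M →ₗ[k] H ⊗[k] M :=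
  TensorProduct.map (μH k H ∘ₗ sw k H H) LinearMap.id
    ∘ₗ asr k H H M
    ∘ₗ TensorProduct.map LinearMap.id (cL ∘ₗ aL)
    ∘ₗ asl k H H M
    ∘ₗ TensorProduct.map (sw k H H) LinearMap.id

/-- `(h₁⊗h₂)⊗m ↦ h₁m⁽⁻¹⁾ ⊗ h₂·m⁽⁰⁾` -/
def ydlR (aL : H ⊗[k] M →ₗ[k] M) (cL : M →ₗ[k] H ⊗[k] M) :
    (H ⊗[k] H) ⊗[k] M →ₗ[k] H ⊗[k] M :=
  TensorProduct.map (μH k H) aL ∘ₗ tt k H H H M ∘ₗ TensorProduct.map LinearMap.id cL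

/-- left-left Yetter–Drinfeld compatibility -/
def CondYDl (aL : H ⊗[k] M →ₗ[k] M) (cL : M →ₗ[k] H ⊗[k] M) : Prop :=
  ∀ (h : H) (m : M),
    ydlL k H aL cL (δH k H h ⊗ₜ m) = ydlR k H aL cL (δH k H h ⊗ₜ m)

/-- left-right Long compatibility -/
def CondLongLR (aL : H ⊗[k] M →ₗ[k] M) (cR : M →ₗ[k] M ⊗[k] H) : Prop :=
  ∀ (h : H) (m : M),
    cR (aL (h ⊗ₜ m))
      = TensorProduct.map aL LinearMap.id ((TensorProduct.assoc k H M H).symm (h ⊗ₜ cR m))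

/-- `m⊗(h₁⊗h₂) ↦ (m·h₂)⁽⁰⁾ ⊗ h₁(m·h₂)⁽¹⁾` -/
def ydrL (aR : M ⊗[k] H →ₗ[k] M) (cR : M →ₗ[k] M ⊗[k] H) :
    M ⊗[k] (H ⊗[k] H) →ₗ[k] M ⊗[k] H :=
  TensorProduct.map LinearMap.id (μH k H ∘ₗ sw k H H)
    ∘ₗ asl k M H H
    ∘ₗ TensorProduct.map (cR ∘ₗ aR) LinearMap.id
    ∘ₗ asr k M H H
    ∘ₗ TensorProduct.map LinearMap.id (sw k H H)

/-- `m⊗(h₁⊗h₂) ↦ m⁽⁰⁾·h₁ ⊗ m⁽¹⁾h₂` -/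
def ydrR (aR : M ⊗[k] H →ₗ[k] M) (cR : M →ₗ[k] M ⊗[k] H) :
    M ⊗[k] (H ⊗[k] H) →ₗ[k] M ⊗[k] H :=
  TensorProduct.map aR (μH k H) ∘ₗ tt k M H H H ∘ₗ TensorProduct.map cR LinearMap.id

/-- right-right Yetter–Drinfeld compatibility -/
def CondYDr (aR : M ⊗[k] H →ₗ[k] M) (cR : M →ₗ[k] M ⊗[k] H) : Prop :=
  ∀ (h : H) (m : M),
    ydrL k H aR cR (m ⊗ₜ δH k H h) = ydrR k H aR cR (m ⊗ₜ δH k H h)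

/-- right-left Long compatibility -/
def CondLongRL (aR : M ⊗[k] H →ₗ[k] M) (cL : M →ₗ[k] H ⊗[k] M) : Prop :=
  ∀ (m : M) (h : H),
    cL (aR (m ⊗ₜ h))
      = TensorProduct.map LinearMap.id aR (TensorProduct.assoc k H M H (cL m ⊗ₜ h))

/-- objects of the category LR(H) -/
def IsLRObj (aL : H ⊗[k] M →ₗ[k] M) (aR : M ⊗[k] H →ₗ[k] M)
    (cL : M →ₗ[k] H ⊗[k] M) (cR : M →ₗ[k] M ⊗[k] H) : Prop :=
  IsBimodule k H aL aR ∧ IsBicomodule k H cL cR ∧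
  CondYDl k H aL cL ∧ CondLongLR k H aL cR ∧ CondYDr k H aR cR ∧ CondLongRL k H aR cL


variable {P : Type*} [AddCommGroup P] [Module k P]

/-- diagonal left action on `M ⊗ N` -/
def tActL (aLM : H ⊗[k] M →ₗ[k] M) (aLN : H ⊗[k] N →ₗ[k] N) :
    H ⊗[k] (M ⊗[k] N) →ₗ[k] M ⊗[k] N :=
  TensorProduct.map aLM aLN ∘ₗ tt k H H M N ∘ₗ TensorProduct.map (δH k H) LinearMap.id

/-- diagonal right action on `M ⊗ N` -/
def tActR (aRM : M ⊗[k] H →ₗ[k] M) (aRN : N ⊗[k] H →ₗ[k] N) :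
    (M ⊗[k] N) ⊗[k] H →ₗ[k] M ⊗[k] N :=
  TensorProduct.map aRM aRN ∘ₗ tt k M N H H ∘ₗ TensorProduct.map LinearMap.id (δH k H)

/-- codiagonal left coaction on `M ⊗ N` -/
def tCoactL (cLM : M →ₗ[k] H ⊗[k] M) (cLN : N →ₗ[k] H ⊗[k] N) :
    M ⊗[k] N →ₗ[k] H ⊗[k] (M ⊗[k] N) :=
  TensorProduct.map (μH k H) LinearMap.id ∘ₗ tt k H M H N ∘ₗ TensorProduct.map cLM cLN

/-- codiagonal right coaction on `M ⊗ N` -/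
def tCoactR (cRM : M →ₗ[k] M ⊗[k] H) (cRN : N →ₗ[k] N ⊗[k] H) :
    M ⊗[k] N →ₗ[k] (M ⊗[k] N) ⊗[k] H :=
  TensorProduct.map LinearMap.id (μH k H) ∘ₗ tt k M H N H ∘ₗ TensorProduct.map cRM cRN

/-- the (pre)braiding `m ⊗ n ↦ m⁽⁻¹⁾·n⁽⁰⁾ ⊗ m⁽⁰⁾·n⁽¹⁾` of LR(H) -/
def braid (cLM : M →ₗ[k] H ⊗[k] M) (aRM : M ⊗[k] H →ₗ[k] M)
    (aLN : H ⊗[k] N →ₗ[k] N) (cRN : N →ₗ[k] N ⊗[k] H) :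
    M ⊗[k] N →ₗ[k] N ⊗[k] M :=
  TensorProduct.map aLN aRM ∘ₗ tt k H M N H ∘ₗ TensorProduct.map cLM cRN

/-- coalgebra axioms for explicit comultiplication and counit -/
def IsCoalg (Δd : M →ₗ[k] M ⊗[k] M) (εd : M →ₗ[k] k) : Prop :=
  (∀ m : M, TensorProduct.lid k M (TensorProduct.map εd LinearMap.id (Δd m)) = m) ∧
  (∀ m : M, TensorProduct.rid k M (TensorProduct.map LinearMap.id εd (Δd m)) = m) ∧
  ∀ m : M, TensorProduct.assoc k M M M (TensorProduct.map Δd LinearMap.id (Δd m))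
    = TensorProduct.map LinearMap.id Δd (Δd m)

/-- `M` is a left `H`-comodule coalgebra -/
def IsLComodCoalg (cL : M →ₗ[k] H ⊗[k] M) (Δd : M →ₗ[k] M ⊗[k] M) (εd : M →ₗ[k] k) : Prop :=
  (∀ m : M,
    TensorProduct.map (μH k H) LinearMap.id (tt k H M H M (TensorProduct.map cL cL (Δd m)))
      = TensorProduct.map LinearMap.id Δd (cL m)) ∧
  ∀ m : M, TensorProduct.rid k H (TensorProduct.map LinearMap.id εd (cL m)) = εd m • (1 : H)

/-- `M` is a right `H`-comodule coalgebra -/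
def IsRComodCoalg (cR : M →ₗ[k] M ⊗[k] H) (Δd : M →ₗ[k] M ⊗[k] M) (εd : M →ₗ[k] k) : Prop :=
  (∀ m : M,
    TensorProduct.map LinearMap.id (μH k H) (tt k M H M H (TensorProduct.map cR cR (Δd m)))
      = TensorProduct.map Δd LinearMap.id (cR m)) ∧
  ∀ m : M, TensorProduct.lid k H (TensorProduct.map εd LinearMap.id (cR m)) = εd m • (1 : H)

/-- morphisms of LR(H) -/
def IsLRHom {M' : Type*} [AddCommGroup M'] [Module k M']
    (aLM : H ⊗[k] M →ₗ[k] M) (aRM : M ⊗[k] H →ₗ[k] M)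
    (cLM : M →ₗ[k] H ⊗[k] M) (cRM : M →ₗ[k] M ⊗[k] H)
    (aLM' : H ⊗[k] M' →ₗ[k] M') (aRM' : M' ⊗[k] H →ₗ[k] M')
    (cLM' : M' →ₗ[k] H ⊗[k] M') (cRM' : M' →ₗ[k] M' ⊗[k] H)
    (f : M →ₗ[k] M') : Prop :=
  (∀ (h : H) (m : M), f (aLM (h ⊗ₜ m)) = aLM' (h ⊗ₜ f m)) ∧
  (∀ (m : M) (h : H), f (aRM (m ⊗ₜ h)) = aRM' (f m ⊗ₜ h)) ∧
  (∀ m : M, cLM' (f m) = TensorProduct.map LinearMap.id f (cLM m)) ∧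
  (∀ m : M, cRM' (f m) = TensorProduct.map f LinearMap.id (cRM m))


end Conditions

section AlgebraConditions
variable (H : Type*) [Ring H] [Bialgebra k H]
variable {D : Type*} [Ring D] [Algebra k D]

/-- multiplication of `D` -/
def μD : D ⊗[k] D →ₗ[k] D := LinearMap.mul' k D

/-- `D` is a left `H`-module algebra -/
def IsLeftModuleAlgebra (aL : H ⊗[k] D →ₗ[k] D) : Prop :=
  (∀ h : H, aL (h ⊗ₜ (1 : D)) = εH k H h • (1 : D)) ∧
  ∀ (h : H) (c d : D),
    aL (h ⊗ₜ (c * d))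
      = μD k (TensorProduct.map aL aL (tt k H H D D (δH k H h ⊗ₜ (c ⊗ₜ d))))

/-- `D` is a right `H`-module algebra -/
def IsRightModuleAlgebra (aR : D ⊗[k] H →ₗ[k] D) : Prop :=
  (∀ h : H, aR ((1 : D) ⊗ₜ h) = εH k H h • (1 : D)) ∧
  ∀ (c d : D) (h : H),
    aR ((c * d) ⊗ₜ h)
      = μD k (TensorProduct.map aR aR (tt k D D H H ((c ⊗ₜ d) ⊗ₜ δH k H h)))

/-- `ε_D` is an algebra map -/
def CondCounitAlg (εd : D →ₗ[k] k) : Prop :=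
  εd 1 = 1 ∧ ∀ c d : D, εd (c * d) = εd c * εd d

/-- `ε_D(h·d) = ε(h)ε_D(d)` and `ε_D(d·h) = ε_D(d)ε(h)` -/
def CondCounitActs (aL : H ⊗[k] D →ₗ[k] D) (aR : D ⊗[k] H →ₗ[k] D) (εd : D →ₗ[k] k) : Prop :=
  ∀ (h : H) (d : D), εd (aL (h ⊗ₜ d)) = εH k H h * εd d ∧ εd (aR (d ⊗ₜ h)) = εd d * εH k H h

/-- unitality of the coactions and of the comultiplication of `D` -/
def CondUnits (cL : D →ₗ[k] H ⊗[k] D) (cR : D →ₗ[k] D ⊗[k] H) (Δd : D →ₗ[k] D ⊗[k] D) : Prop :=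
  cL 1 = 1 ⊗ₜ 1 ∧ cR 1 = 1 ⊗ₜ 1 ∧ Δd 1 = 1 ⊗ₜ 1

/-- both coactions of `D` are multiplicative -/
def CondCoactMul (cL : D →ₗ[k] H ⊗[k] D) (cR : D →ₗ[k] D ⊗[k] H) : Prop :=
  (∀ c d : D, cL (c * d)
      = TensorProduct.map (μH k H) (μD k) (tt k H D H D (cL c ⊗ₜ cL d))) ∧
  ∀ c d : D, cR (c * d)
      = TensorProduct.map (μD k) (μH k H) (tt k D H D H (cR c ⊗ₜ cR d))

/-- `Δ_D` is an `H`-bimodule map -/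
def CondComulAct (aL : H ⊗[k] D →ₗ[k] D) (aR : D ⊗[k] H →ₗ[k] D)
    (Δd : D →ₗ[k] D ⊗[k] D) : Prop :=
  (∀ (h : H) (d : D), Δd (aL (h ⊗ₜ d))
      = TensorProduct.map aL aL (tt k H H D D (δH k H h ⊗ₜ Δd d))) ∧
  ∀ (d : D) (h : H), Δd (aR (d ⊗ₜ h))
      = TensorProduct.map aR aR (tt k D D H H (Δd d ⊗ₜ δH k H h))

/-- `Δ_D(cd) = c₁(c₂⁽⁻¹⁾·d₁⁽⁰⁾) ⊗ (c₂⁽⁰⁾·d₁⁽¹⁾)d₂` -/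
def CondBraidMul (aL : H ⊗[k] D →ₗ[k] D) (aR : D ⊗[k] H →ₗ[k] D)
    (cL : D →ₗ[k] H ⊗[k] D) (cR : D →ₗ[k] D ⊗[k] H) (Δd : D →ₗ[k] D ⊗[k] D) : Prop :=
  ∀ c d : D, Δd (c * d)
    = TensorProduct.map (μD k) (μD k)
        (middle k (braid k H cL aR aL cR) (Δd c ⊗ₜ Δd d))

/-- `c⁽⁰⁾·d⁽⁻¹⁾ ⊗ c⁽¹⁾·d⁽⁰⁾ = c ⊗ d` -/
def Cond114 (aL : H ⊗[k] D →ₗ[k] D) (aR : D ⊗[k] H →ₗ[k] D)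
    (cL : D →ₗ[k] H ⊗[k] D) (cR : D →ₗ[k] D ⊗[k] H) : Prop :=
  ∀ c d : D, TensorProduct.map aR aL (tt k D H H D (cR c ⊗ₜ cL d)) = c ⊗ₜ d

/-- `(H, D)` is an L-R-admissible pair -/
def LRAdmissible (aL : H ⊗[k] D →ₗ[k] D) (aR : D ⊗[k] H →ₗ[k] D)
    (cL : D →ₗ[k] H ⊗[k] D) (cR : D →ₗ[k] D ⊗[k] H)
    (Δd : D →ₗ[k] D ⊗[k] D) (εd : D →ₗ[k] k) : Prop :=
  IsBimodule k H aL aR ∧ IsLeftModuleAlgebra k H aL ∧ IsRightModuleAlgebra k H aR ∧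
  IsBicomodule k H cL cR ∧ IsCoalg k Δd εd ∧
  IsLComodCoalg k H cL Δd εd ∧ IsRComodCoalg k H cR Δd εd ∧
  CondCounitAlg k εd ∧ CondCounitActs k H aL aR εd ∧ CondUnits k H cL cR Δd ∧
  CondCoactMul k H cL cR ∧ CondComulAct k H aL aR Δd ∧ CondBraidMul k H aL aR cL cR Δd ∧
  CondYDl k H aL cL ∧ CondLongLR k H aL cR ∧ CondYDr k H aR cR ∧ CondLongRL k H aR cL ∧
  Cond114 k H aL aR cL cR

/-- `Σ (d·h'₂) ⊗ h'₁` -/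
def Xel (aR : D ⊗[k] H →ₗ[k] D) (d : D) (h' : H) : D ⊗[k] H :=
  TensorProduct.map aR LinearMap.id
    ((TensorProduct.assoc k D H H).symm (d ⊗ₜ TensorProduct.comm k H H (δH k H h')))

/-- `Σ (h₁·d') ⊗ h₂` -/
def Yel (aL : H ⊗[k] D →ₗ[k] D) (h : H) (d' : D) : D ⊗[k] H :=
  TensorProduct.comm k H D
    (TensorProduct.map LinearMap.id aL
      (TensorProduct.assoc k H H D
        (TensorProduct.map (sw k H H) LinearMap.id (δH k H h ⊗ₜ d'))))

/-- the element `(d·h'₂)(h₁·d') ⊗ h₂h'₁` of the L-R-smash product -/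
def smashMulExpr (aL : H ⊗[k] D →ₗ[k] D) (aR : D ⊗[k] H →ₗ[k] D)
    (d : D) (h : H) (d' : D) (h' : H) : D ⊗[k] H :=
  TensorProduct.map (μD k) (μH k H ∘ₗ sw k H H)
    (tt k D H D H (Xel k H aR d h' ⊗ₜ Yel k H aL h d'))

end AlgebraConditions

section CoproductGeneric
variable (H : Type*) [Ring H] [Bialgebra k H]
variable {D : Type*} [AddCommGroup D] [Module k D]

/-- structure map of the L-R-smash coproduct:
`(d₁⊗d₂)⊗(h₁⊗h₂) ↦ (d₁⁽⁰⁾ ⊗ d₂⁽⁻¹⁾h₁) ⊗ (d₂⁽⁰⁾ ⊗ h₂d₁⁽¹⁾)` -/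
def Wmap (cL : D →ₗ[k] H ⊗[k] D) (cR : D →ₗ[k] D ⊗[k] H) :
    (D ⊗[k] D) ⊗[k] (H ⊗[k] H) →ₗ[k] (D ⊗[k] H) ⊗[k] (D ⊗[k] H) :=
  TensorProduct.map
      (TensorProduct.map LinearMap.id (μH k H) ∘ₗ asl k D H H)
      (TensorProduct.map LinearMap.id (μH k H ∘ₗ sw k H H) ∘ₗ asl k D H H
        ∘ₗ TensorProduct.map (sw k H D) LinearMap.id)
    ∘ₗ tt k (D ⊗[k] H) (H ⊗[k] D) H H
    ∘ₗ TensorProduct.map (tt k D H H D) LinearMap.id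
    ∘ₗ TensorProduct.map (TensorProduct.map cR cL) LinearMap.id

/-- counit of the L-R-smash coproduct -/
def smashCounit (εd : D →ₗ[k] k) : D ⊗[k] H →ₗ[k] k :=
  LinearMap.mul' k k ∘ₗ TensorProduct.map εd (εH k H)



end CoproductGeneric

/-- the trivial right action `d·h = ε(h)d` -/
def trivActR {D : Type*} [AddCommGroup D] [Module k D] (H : Type*) [Ring H] [Bialgebra k H] :
    D ⊗[k] H →ₗ[k] D :=
  (TensorProduct.rid k D).toLinearMap ∘ₗ TensorProduct.map LinearMap.id (εH k H)

/-- the trivial right coaction `d ↦ d ⊗ 1` -/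
def trivCoactR {D : Type*} [AddCommGroup D] [Module k D] (H : Type*) [Ring H] [Bialgebra k H] :
    D →ₗ[k] D ⊗[k] H :=
  TensorProduct.map LinearMap.id (Algebra.linearMap k H) ∘ₗ (TensorProduct.rid k D).symm.toLinearMap

/-- the trivial left action `h·d = ε(h)d` -/
def trivActL {D : Type*} [AddCommGroup D] [Module k D] (H : Type*) [Ring H] [Bialgebra k H] :
    H ⊗[k] D →ₗ[k] D :=
  (TensorProduct.lid k D).toLinearMap ∘ₗ TensorProduct.map (εH k H) LinearMap.id

/-- the trivial left coaction `d ↦ 1 ⊗ d` -/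
def trivCoactL {D : Type*} [AddCommGroup D] [Module k D] (H : Type*) [Ring H] [Bialgebra k H] :
    D →ₗ[k] H ⊗[k] D :=
  TensorProduct.map (Algebra.linearMap k H) LinearMap.id ∘ₗ (TensorProduct.lid k D).symm.toLinearMap

section DoubleBiproduct
variable (H : Type*) [Ring H] [Bialgebra k H]
variable (A B : Type*) [Ring A] [Algebra k A] [Ring B] [Algebra k B]

/-- braiding of the left-left Yetter-Drinfeld category: `x ⊗ y ↦ x⁽⁻¹⁾·y ⊗ x⁽⁰⁾` -/
def braidYDl (cA : A →ₗ[k] H ⊗[k] A) (aA : H ⊗[k] A →ₗ[k] A) :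
    A ⊗[k] A →ₗ[k] A ⊗[k] A :=
  sw k A A ∘ₗ TensorProduct.map LinearMap.id aA ∘ₗ asl k A H A
    ∘ₗ TensorProduct.map (sw k H A) LinearMap.id ∘ₗ TensorProduct.map cA LinearMap.id

/-- braiding of the right-right Yetter-Drinfeld category: `x ⊗ y ↦ y⁽⁰⁾ ⊗ x·y⁽¹⁾` -/
def braidYDr (cB : B →ₗ[k] B ⊗[k] H) (aB : B ⊗[k] H →ₗ[k] B) :
    B ⊗[k] B →ₗ[k] B ⊗[k] B :=
  TensorProduct.map LinearMap.id aB ∘ₗ asl k B B H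
    ∘ₗ TensorProduct.map (sw k B B) LinearMap.id ∘ₗ asr k B B H
    ∘ₗ TensorProduct.map LinearMap.id cB

/-- `A` is a bialgebra in the left-left Yetter-Drinfeld category over `H` -/
def YDlBialgebra (aA : H ⊗[k] A →ₗ[k] A) (cA : A →ₗ[k] H ⊗[k] A)
    (ΔA : A →ₗ[k] A ⊗[k] A) (εA : A →ₗ[k] k) : Prop :=
  IsLeftModule k H aA ∧ IsLeftComodule k H cA ∧ CondYDl k H aA cA ∧
  IsLeftModuleAlgebra k H aA ∧
  (∀ a a' : A, cA (a * a')
      = TensorProduct.map (μH k H) (μD k) (tt k H A H A (cA a ⊗ₜ cA a'))) ∧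
  cA 1 = 1 ⊗ₜ 1 ∧ IsCoalg k ΔA εA ∧ CondCounitAlg k εA ∧
  (∀ (h : H) (a : A), εA (aA (h ⊗ₜ a)) = εH k H h * εA a) ∧ ΔA 1 = 1 ⊗ₜ 1 ∧
  (∀ (h : H) (a : A), ΔA (aA (h ⊗ₜ a))
      = TensorProduct.map aA aA (tt k H H A A (δH k H h ⊗ₜ ΔA a))) ∧
  IsLComodCoalg k H cA ΔA εA ∧
  ∀ a a' : A, ΔA (a * a')
      = TensorProduct.map (μD k) (μD k)
          (middle k (braidYDl k H A cA aA) (ΔA a ⊗ₜ ΔA a'))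

/-- `B` is a bialgebra in the right-right Yetter-Drinfeld category over `H` -/
def YDrBialgebra (aB : B ⊗[k] H →ₗ[k] B) (cB : B →ₗ[k] B ⊗[k] H)
    (ΔB : B →ₗ[k] B ⊗[k] B) (εB : B →ₗ[k] k) : Prop :=
  IsRightModule k H aB ∧ IsRightComodule k H cB ∧ CondYDr k H aB cB ∧
  IsRightModuleAlgebra k H aB ∧
  (∀ b b' : B, cB (b * b')
      = TensorProduct.map (μD k) (μH k H) (tt k B H B H (cB b ⊗ₜ cB b'))) ∧
  cB 1 = 1 ⊗ₜ 1 ∧ IsCoalg k ΔB εB ∧ CondCounitAlg k εB ∧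
  (∀ (b : B) (h : H), εB (aB (b ⊗ₜ h)) = εB b * εH k H h) ∧ ΔB 1 = 1 ⊗ₜ 1 ∧
  (∀ (b : B) (h : H), ΔB (aB (b ⊗ₜ h))
      = TensorProduct.map aB aB (tt k B B H H (ΔB b ⊗ₜ δH k H h))) ∧
  IsRComodCoalg k H cB ΔB εB ∧
  ∀ b b' : B, ΔB (b * b')
      = TensorProduct.map (μD k) (μD k)
          (middle k (braidYDr k H B cB aB) (ΔB b ⊗ₜ ΔB b'))

/-- the trivial-pairing condition `b² ▷ a² ⊗ b¹ ◁ a¹ = a ⊗ b` -/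
def PairingTrivial (aA : H ⊗[k] A →ₗ[k] A) (cA : A →ₗ[k] H ⊗[k] A)
    (aB : B ⊗[k] H →ₗ[k] B) (cB : B →ₗ[k] B ⊗[k] H) : Prop :=
  ∀ (a : A) (b : B),
    sw k B A (TensorProduct.map aB aA (tt k B H H A (cB b ⊗ₜ cA a))) = a ⊗ₜ b

/-- `Σ a(h₁ ▷ a') ⊗ h₂` -/
def P1 (aA : H ⊗[k] A →ₗ[k] A) (a : A) (h : H) (a' : A) : A ⊗[k] H :=
  TensorProduct.map (μD k) LinearMap.id
    ((TensorProduct.assoc k A A H).symm (a ⊗ₜ Yel k H aA h a'))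

/-- `Σ h'₁ ⊗ (b ◁ h'₂)b'` -/
def P2 (aB : B ⊗[k] H →ₗ[k] B) (b : B) (h' : H) (b' : B) : H ⊗[k] B :=
  TensorProduct.map LinearMap.id (μD k)
    (TensorProduct.assoc k H B B
      ((sw k B H
          (TensorProduct.map aB LinearMap.id
            ((TensorProduct.assoc k B H H).symm
              (TensorProduct.map LinearMap.id (sw k H H) (b ⊗ₜ δH k H h'))))) ⊗ₜ b'))

/-- `(x⊗u)⊗(v⊗y) ↦ (x ⊗ uv) ⊗ y` -/
def combineAHB : (A ⊗[k] H) ⊗[k] (H ⊗[k] B) →ₗ[k] (A ⊗[k] H) ⊗[k] B :=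
  TensorProduct.map (TensorProduct.map LinearMap.id (μH k H)) LinearMap.id
    ∘ₗ TensorProduct.map (asl k A H H) LinearMap.id
    ∘ₗ (TensorProduct.assoc k (A ⊗[k] H) H B).symm.toLinearMap

/-- the element `a(h₁▷a') # h₂h'₁ # (b◁h'₂)b'` of the double biproduct -/
def dblMulExpr (aA : H ⊗[k] A →ₗ[k] A) (aB : B ⊗[k] H →ₗ[k] B)
    (a : A) (h : H) (b : B) (a' : A) (h' : H) (b' : B) : (A ⊗[k] H) ⊗[k] B :=
  combineAHB k H A B (P1 k H A aA a h a' ⊗ₜ P2 k H B aB b h' b')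

/-- comultiplication map of the double biproduct:
`((a₁⊗a₂)⊗(h₁⊗h₂))⊗(b₁⊗b₂) ↦ (a₁ # a₂¹h₁ # b₁¹) ⊗ (a₂² # h₂b₁² # b₂)` -/
def Wd (cA : A →ₗ[k] H ⊗[k] A) (cB : B →ₗ[k] B ⊗[k] H) :
    ((A ⊗[k] A) ⊗[k] (H ⊗[k] H)) ⊗[k] (B ⊗[k] B) →ₗ[k]
      ((A ⊗[k] H) ⊗[k] B) ⊗[k] ((A ⊗[k] H) ⊗[k] B) :=
  TensorProduct.map LinearMap.id
      (TensorProduct.map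
          (TensorProduct.map LinearMap.id (μH k H) ∘ₗ asl k A H H ∘ₗ sw k H (A ⊗[k] H))
          LinearMap.id
        ∘ₗ (TensorProduct.assoc k H (A ⊗[k] H) B).symm.toLinearMap)
    ∘ₗ (TensorProduct.assoc k ((A ⊗[k] H) ⊗[k] B) H ((A ⊗[k] H) ⊗[k] B)).toLinearMap
    ∘ₗ TensorProduct.map (TensorProduct.assoc k (A ⊗[k] H) B H).symm.toLinearMap LinearMap.id
    ∘ₗ tt k (A ⊗[k] H) (A ⊗[k] H) (B ⊗[k] H) B
    ∘ₗ TensorProduct.map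
        (TensorProduct.map (TensorProduct.map LinearMap.id (μH k H) ∘ₗ asl k A H H) LinearMap.id)
        LinearMap.id
    ∘ₗ TensorProduct.map (tt k (A ⊗[k] H) A H H) LinearMap.id
    ∘ₗ TensorProduct.map
        (TensorProduct.map
          ((TensorProduct.assoc k A H A).symm.toLinearMap ∘ₗ TensorProduct.map LinearMap.id cA)
          LinearMap.id)
        (TensorProduct.map cB LinearMap.id)

/-- counit of the double biproduct -/
def dblCounit (εA : A →ₗ[k] k) (εB : B →ₗ[k] k) : (A ⊗[k] H) ⊗[k] B →ₗ[k] k :=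
  LinearMap.mul' k k
    ∘ₗ TensorProduct.map (LinearMap.mul' k k ∘ₗ TensorProduct.map εA (εH k H)) εB

/-- induced left action on `D = A ⊗ B` -/
def dActL (aA : H ⊗[k] A →ₗ[k] A) : H ⊗[k] (A ⊗[k] B) →ₗ[k] A ⊗[k] B :=
  TensorProduct.map aA LinearMap.id ∘ₗ asr k H A B

/-- induced right action on `D = A ⊗ B` -/
def dActR (aB : B ⊗[k] H →ₗ[k] B) : (A ⊗[k] B) ⊗[k] H →ₗ[k] A ⊗[k] B :=
  TensorProduct.map LinearMap.id aB ∘ₗ asl k A B H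

/-- induced left coaction on `D = A ⊗ B` -/
def dCoactL (cA : A →ₗ[k] H ⊗[k] A) : A ⊗[k] B →ₗ[k] H ⊗[k] (A ⊗[k] B) :=
  asl k H A B ∘ₗ TensorProduct.map cA LinearMap.id

/-- induced right coaction on `D = A ⊗ B` -/
def dCoactR (cB : B →ₗ[k] B ⊗[k] H) : A ⊗[k] B →ₗ[k] (A ⊗[k] B) ⊗[k] H :=
  asr k A B H ∘ₗ TensorProduct.map LinearMap.id cB

/-- tensor product comultiplication on `D = A ⊗ B` -/
def dComul (ΔA : A →ₗ[k] A ⊗[k] A) (ΔB : B →ₗ[k] B ⊗[k] B) :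
    A ⊗[k] B →ₗ[k] (A ⊗[k] B) ⊗[k] (A ⊗[k] B) :=
  tt k A A B B ∘ₗ TensorProduct.map ΔA ΔB

/-- tensor product counit on `D = A ⊗ B` -/
def dCounit (εA : A →ₗ[k] k) (εB : B →ₗ[k] k) : A ⊗[k] B →ₗ[k] k :=
  LinearMap.mul' k k ∘ₗ TensorProduct.map εA εB

/-- `(a ⊗ b) ⊗ h ↦ (a ⊗ h) ⊗ b` -/
def phiAB : (A ⊗[k] B) ⊗[k] H →ₗ[k] (A ⊗[k] H) ⊗[k] B :=
  asr k A H B ∘ₗ TensorProduct.map LinearMap.id (sw k B H) ∘ₗ asl k A B H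

end DoubleBiproduct

section Pointwise
variable (H : Type*) [Ring H] [Bialgebra k H]
variable (M N : Type*) [AddCommGroup M] [Module k M] [AddCommGroup N] [Module k N]

/-- left action on `M ⊗ N` through the first factor -/
def pActL (aLM : H ⊗[k] M →ₗ[k] M) : H ⊗[k] (M ⊗[k] N) →ₗ[k] M ⊗[k] N :=
  TensorProduct.map aLM LinearMap.id ∘ₗ asr k H M N

/-- right action on `M ⊗ N` through the second factor -/
def pActR (aRN : N ⊗[k] H →ₗ[k] N) : (M ⊗[k] N) ⊗[k] H →ₗ[k] M ⊗[k] N :=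
  TensorProduct.map LinearMap.id aRN ∘ₗ asl k M N H

/-- left coaction on `M ⊗ N` through the first factor -/
def pCoactL (cLM : M →ₗ[k] H ⊗[k] M) : M ⊗[k] N →ₗ[k] H ⊗[k] (M ⊗[k] N) :=
  asl k H M N ∘ₗ TensorProduct.map cLM LinearMap.id

/-- right coaction on `M ⊗ N` through the second factor -/
def pCoactR (cRN : N →ₗ[k] N ⊗[k] H) : M ⊗[k] N →ₗ[k] (M ⊗[k] N) ⊗[k] H :=
  asr k M N H ∘ₗ TensorProduct.map LinearMap.id cRN

end Pointwise

section Identities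
variable (H : Type*) [Ring H] [Bialgebra k H]
variable (D : Type*) [Ring D] [Algebra k D]

/-- `c₂ ⊗ (h₁ ⊗ (d₁⁽⁰⁾ ⊗ d₁⁽¹⁾)) ↦ (c₂⁽⁻¹⁾h₁·d₁⁽⁰⁾) ⊗ (c₂⁽⁰⁾·d₁⁽¹⁾)` -/
def Fmap (aL : H ⊗[k] D →ₗ[k] D) (aR : D ⊗[k] H →ₗ[k] D) (cL : D →ₗ[k] H ⊗[k] D) :
    D ⊗[k] (H ⊗[k] (D ⊗[k] H)) →ₗ[k] D ⊗[k] D :=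
  TensorProduct.map aL LinearMap.id
    ∘ₗ asr k H D D
    ∘ₗ TensorProduct.map LinearMap.id
        (sw k D D ∘ₗ TensorProduct.map aR LinearMap.id ∘ₗ asr k D H D
          ∘ₗ TensorProduct.map LinearMap.id (sw k D H))
    ∘ₗ TensorProduct.map (μH k H) LinearMap.id
    ∘ₗ tt k H D H (D ⊗[k] H)
    ∘ₗ TensorProduct.map cL LinearMap.id

/-- `(h₁⊗h₂)⊗(c⊗d) ↦ [c(h₁·d)]₁ ⊗ ([c(h₁·d)]₂⁽⁻¹⁾h₂ ⊗ [c(h₁·d)]₂⁽⁰⁾)` -/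
def L3map (aL : H ⊗[k] D →ₗ[k] D) (cL : D →ₗ[k] H ⊗[k] D) (Δd : D →ₗ[k] D ⊗[k] D) :
    (H ⊗[k] H) ⊗[k] (D ⊗[k] D) →ₗ[k] D ⊗[k] (H ⊗[k] D) :=
  TensorProduct.map LinearMap.id (TensorProduct.map (μH k H) LinearMap.id)
    ∘ₗ TensorProduct.map LinearMap.id (asr k H H D)
    ∘ₗ asl k D H (H ⊗[k] D)
    ∘ₗ tt k D H H D
    ∘ₗ TensorProduct.map (sw k H D) LinearMap.id
    ∘ₗ asr k H D (H ⊗[k] D)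
    ∘ₗ TensorProduct.map LinearMap.id (TensorProduct.map LinearMap.id cL)
    ∘ₗ TensorProduct.map LinearMap.id Δd
    ∘ₗ TensorProduct.map LinearMap.id (μD k)
    ∘ₗ asl k H D D
    ∘ₗ TensorProduct.map LinearMap.id aL
    ∘ₗ tt k H H D D
    ∘ₗ TensorProduct.map (sw k H H) LinearMap.id

/-- `((h₁⊗h₂)⊗h₃)⊗((c₁⊗c₂)⊗(d₁⊗d₂)) ↦`
`c₁(c₂⁽⁻¹⁾h₁·d₁⁽⁰⁾) ⊗ (c₂⁽⁰⁾⁽⁻¹⁾h₂d₂⁽⁻¹⁾ ⊗ (c₂⁽⁰⁾⁽⁰⁾·d₁⁽¹⁾)(h₃·d₂⁽⁰⁾))` -/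
def R3map (aL : H ⊗[k] D →ₗ[k] D) (aR : D ⊗[k] H →ₗ[k] D)
    (cL : D →ₗ[k] H ⊗[k] D) (cR : D →ₗ[k] D ⊗[k] H) :
    ((H ⊗[k] H) ⊗[k] H) ⊗[k] ((D ⊗[k] D) ⊗[k] (D ⊗[k] D)) →ₗ[k]
      D ⊗[k] (H ⊗[k] D) :=
  TensorProduct.map (μD k) LinearMap.id
    ∘ₗ asr k D D (H ⊗[k] D)
    ∘ₗ TensorProduct.map LinearMap.id
        (asl k D H D
          ∘ₗ TensorProduct.map LinearMap.id (μD k)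
          ∘ₗ TensorProduct.map (TensorProduct.map aL (μH k H)) (TensorProduct.map aR aL)
          ∘ₗ TensorProduct.map (tt k H H D H) (tt k D H H D)
          ∘ₗ tt k (H ⊗[k] H) (D ⊗[k] H) (D ⊗[k] H) (H ⊗[k] D)
          ∘ₗ TensorProduct.map LinearMap.id (tt k D H H D))
    ∘ₗ asl k D ((H ⊗[k] H) ⊗[k] (D ⊗[k] H)) ((D ⊗[k] H) ⊗[k] (H ⊗[k] D))
    ∘ₗ TensorProduct.map
        (TensorProduct.map LinearMap.id
          (TensorProduct.map (TensorProduct.map (μH k H) (μH k H)) LinearMap.id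
            ∘ₗ TensorProduct.map (tt k H H H H) LinearMap.id
            ∘ₗ tt k (H ⊗[k] H) D (H ⊗[k] H) H))
        LinearMap.id
    ∘ₗ TensorProduct.map (asl k D ((H ⊗[k] H) ⊗[k] D) ((H ⊗[k] H) ⊗[k] H)) LinearMap.id
    ∘ₗ TensorProduct.map (sw k ((H ⊗[k] H) ⊗[k] H) (D ⊗[k] ((H ⊗[k] H) ⊗[k] D))) LinearMap.id
    ∘ₗ asr k ((H ⊗[k] H) ⊗[k] H) (D ⊗[k] ((H ⊗[k] H) ⊗[k] D))
        ((D ⊗[k] H) ⊗[k] (H ⊗[k] D))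
    ∘ₗ TensorProduct.map LinearMap.id
        (TensorProduct.map (TensorProduct.map LinearMap.id (asr k H H D)) LinearMap.id)
    ∘ₗ TensorProduct.map LinearMap.id
        (TensorProduct.map
          (TensorProduct.map LinearMap.id (TensorProduct.map LinearMap.id cL ∘ₗ cL))
          (TensorProduct.map cR cL))

end Identities

section Radford
variable (H : Type*) [Ring H] [Bialgebra k H]
variable (D : Type*) [Ring D] [Algebra k D]

/-- Radford's admissible-pair conditions for a left module algebra, left comodule
coalgebra `D` -/
def RadfordAdmissible (aL : H ⊗[k] D →ₗ[k] D) (cL : D →ₗ[k] H ⊗[k] D)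
    (Δd : D →ₗ[k] D ⊗[k] D) (εd : D →ₗ[k] k) : Prop :=
  IsLeftModule k H aL ∧ IsLeftModuleAlgebra k H aL ∧ IsLeftComodule k H cL ∧
  IsCoalg k Δd εd ∧ IsLComodCoalg k H cL Δd εd ∧ CondCounitAlg k εd ∧
  (∀ (h : H) (d : D), εd (aL (h ⊗ₜ d)) = εH k H h * εd d) ∧
  Δd 1 = 1 ⊗ₜ 1 ∧ cL 1 = 1 ⊗ₜ 1 ∧
  (∀ c d : D, cL (c * d)
      = TensorProduct.map (μH k H) (μD k) (tt k H D H D (cL c ⊗ₜ cL d))) ∧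
  (∀ (h : H) (d : D), Δd (aL (h ⊗ₜ d))
      = TensorProduct.map aL aL (tt k H H D D (δH k H h ⊗ₜ Δd d))) ∧
  (∀ c d : D, Δd (c * d)
      = TensorProduct.map (μD k) (μD k)
          (middle k (braidYDl k H D cL aL) (Δd c ⊗ₜ Δd d))) ∧
  CondYDl k H aL cL

/-- the element `d(h₁·d') ⊗ h₂h'` of the Radford biproduct -/
def radMulExpr (aL : H ⊗[k] D →ₗ[k] D) (d : D) (h : H) (d' : D) (h' : H) : D ⊗[k] H :=
  TensorProduct.map (μD k) (μH k H ∘ₗ sw k H H)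
    (tt k D H D H ((d ⊗ₜ h') ⊗ₜ Yel k H aL h d'))

/-- comultiplication map of the Radford biproduct:
`(d₁⊗d₂)⊗(h₁⊗h₂) ↦ (d₁ ⊗ d₂⁽⁻¹⁾h₁) ⊗ (d₂⁽⁰⁾ ⊗ h₂)` -/
def WRad (cL : D →ₗ[k] H ⊗[k] D) :
    (D ⊗[k] D) ⊗[k] (H ⊗[k] H) →ₗ[k] (D ⊗[k] H) ⊗[k] (D ⊗[k] H) :=
  TensorProduct.map (TensorProduct.map LinearMap.id (μH k H) ∘ₗ asl k D H H) LinearMap.id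
    ∘ₗ tt k (D ⊗[k] H) D H H
    ∘ₗ TensorProduct.map (asr k D H D) LinearMap.id
    ∘ₗ TensorProduct.map (TensorProduct.map LinearMap.id cL) LinearMap.id

/-- `(h₁·d) ⊗ h₂` reversed version: `(h₂·d) ⊗ h₁` -/
def Y2el (aL : H ⊗[k] D →ₗ[k] D) (h : H) (d : D) : D ⊗[k] H :=
  TensorProduct.comm k H D
    (TensorProduct.map LinearMap.id aL (TensorProduct.assoc k H H D (δH k H h ⊗ₜ d)))

/-- `(d·h₁) ⊗ h₂` -/
def X1el (aR : D ⊗[k] H →ₗ[k] D) (d : D) (h : H) : D ⊗[k] H :=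
  TensorProduct.map aR LinearMap.id ((TensorProduct.assoc k D H H).symm (d ⊗ₜ δH k H h))

end Radford
end LRPaper

namespace LRPaper

section HexagonAux
variable {k : Type*} [CommRing k] {H : Type*} [Ring H] [Bialgebra k H]
variable {M N P : Type*} [AddCommGroup M] [Module k M] [AddCommGroup N] [Module k N]
  [AddCommGroup P] [Module k P]

/-- auxiliary map: `(a⊗(b⊗m'))⊗((n'⊗g)⊗(p'⊗f)) ↦ aLN(a⊗n') ⊗ (aLP(b⊗p') ⊗ aRM(aRM(m'⊗g)⊗f))` -/
def Theta (aLN : H ⊗[k] N →ₗ[k] N) (aRM : M ⊗[k] H →ₗ[k] M) (aLP : H ⊗[k] P →ₗ[k] P) :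
    (H ⊗[k] (H ⊗[k] M)) ⊗[k] ((N ⊗[k] H) ⊗[k] (P ⊗[k] H)) →ₗ[k] N ⊗[k] (P ⊗[k] M) :=
  asl k N P M
    ∘ₗ TensorProduct.map (TensorProduct.map aLN aLP)
        (aRM ∘ₗ TensorProduct.map aRM LinearMap.id ∘ₗ asr k M H H)
    ∘ₗ TensorProduct.map (tt k H H N P) LinearMap.id
    ∘ₗ tt k (H ⊗[k] H) M (N ⊗[k] P) (H ⊗[k] H)
    ∘ₗ TensorProduct.map LinearMap.id (tt k N H P H)
    ∘ₗ TensorProduct.map (asr k H H M) LinearMap.id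

lemma Theta_tmul (aLN : H ⊗[k] N →ₗ[k] N) (aRM : M ⊗[k] H →ₗ[k] M) (aLP : H ⊗[k] P →ₗ[k] P)
    (a b : H) (m' : M) (n' : N) (g : H) (p' : P) (f : H) :
    Theta aLN aRM aLP ((a ⊗ₜ (b ⊗ₜ m')) ⊗ₜ[k] ((n' ⊗ₜ g) ⊗ₜ (p' ⊗ₜ f)))
      = aLN (a ⊗ₜ n') ⊗ₜ (aLP (b ⊗ₜ p') ⊗ₜ aRM (aRM (m' ⊗ₜ g) ⊗ₜ f)) := by
  simp [Theta, tt, asl, asr]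

lemma hex_lemA' (aLN : H ⊗[k] N →ₗ[k] N) (aRM : M ⊗[k] H →ₗ[k] M) (aLP : H ⊗[k] P →ₗ[k] P)
    (m' : M) (n' : N) (g : H) (p' : P) (f : H) (q : H ⊗[k] H) :
    TensorProduct.assoc k N P M
        ((TensorProduct.map aLN aLP (tt k H H N P (q ⊗ₜ (n' ⊗ₜ p'))))
          ⊗ₜ aRM (aRM (m' ⊗ₜ g) ⊗ₜ f))
      = Theta aLN aRM aLP ((asl k H H M (q ⊗ₜ m')) ⊗ₜ ((n' ⊗ₜ g) ⊗ₜ (p' ⊗ₜ f))) := by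
  induction q using TensorProduct.induction_on with
  | zero => simp
  | add x y hx hy => simp only [add_tmul, map_add, hx, hy]
  | tmul h1 h2 => simp [Theta_tmul, tt, asl]

/-- the left-hand side of the hexagon, generalized over `u = cLM m`. -/
lemma hex_lemA (aLN : H ⊗[k] N →ₗ[k] N) (aRM : M ⊗[k] H →ₗ[k] M) (aLP : H ⊗[k] P →ₗ[k] P)
    (hR : ∀ (m : M) (h h' : H), aRM (m ⊗ₜ (h * h')) = aRM (aRM (m ⊗ₜ h) ⊗ₜ h'))
    (u : H ⊗[k] M) (vN : N ⊗[k] H) (vP : P ⊗[k] H) :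
    TensorProduct.assoc k N P M
        (TensorProduct.map (tActL k H aLN aLP) aRM
          (tt k H M (N ⊗[k] P) H
            (u ⊗ₜ (TensorProduct.map LinearMap.id (μH k H) (tt k N H P H (vN ⊗ₜ vP))))))
      = Theta aLN aRM aLP
          ((asl k H H M (TensorProduct.map (δH k H) LinearMap.id u)) ⊗ₜ (vN ⊗ₜ vP)) := by
  induction u using TensorProduct.induction_on with
  | zero => simp
  | add x y hx hy => simp only [add_tmul, map_add, hx, hy]
  | tmul a m' =>
    induction vN using TensorProduct.induction_on with
    | zero => simp
    | add x y hx hy => simp only [add_tmul, tmul_add, map_add, hx, hy]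
    | tmul n' g =>
      induction vP using TensorProduct.induction_on with
      | zero => simp
      | add x y hx hy => simp only [add_tmul, tmul_add, map_add, hx, hy]
      | tmul p' f =>
        have h1 : tt k N H P H ((n' ⊗ₜ[k] g) ⊗ₜ (p' ⊗ₜ f)) = (n' ⊗ₜ p') ⊗ₜ (g ⊗ₜ f) := by
          simp [tt]
        rw [h1]
        have h2 : TensorProduct.map (LinearMap.id (R := k)) (μH k H)
            ((n' ⊗ₜ[k] p') ⊗ₜ (g ⊗ₜ f)) = (n' ⊗ₜ p') ⊗ₜ (g * f) := by
          simp [μH]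
        rw [h2]
        have h3 : tt k H M (N ⊗[k] P) H ((a ⊗ₜ[k] m') ⊗ₜ ((n' ⊗ₜ p') ⊗ₜ (g * f)))
            = (a ⊗ₜ (n' ⊗ₜ p')) ⊗ₜ (m' ⊗ₜ (g * f)) := by simp [tt]
        rw [h3]
        have h4 : TensorProduct.map (tActL k H aLN aLP) aRM
              ((a ⊗ₜ[k] (n' ⊗ₜ p')) ⊗ₜ (m' ⊗ₜ (g * f)))
            = (TensorProduct.map aLN aLP (tt k H H N P (δH k H a ⊗ₜ (n' ⊗ₜ p'))))
                ⊗ₜ aRM (aRM (m' ⊗ₜ g) ⊗ₜ f) := by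
          simp [tActL, hR m' g f]
        rw [h4]
        have h5 : TensorProduct.map (δH k H) (LinearMap.id (R := k)) (a ⊗ₜ[k] m')
            = δH k H a ⊗ₜ m' := by simp
        rw [h5, hex_lemA']

lemma hex_lemB' (aLN : H ⊗[k] N →ₗ[k] N) (aRM : M ⊗[k] H →ₗ[k] M) (aLP : H ⊗[k] P →ₗ[k] P)
    (a : H) (n' : N) (g : H) (w : H ⊗[k] M) (vP : P ⊗[k] H) :
    aLN (a ⊗ₜ n') ⊗ₜ[k]
        (TensorProduct.map aLP aRM
          (tt k H M P H
            ((TensorProduct.map LinearMap.id aRM (TensorProduct.assoc k H M H (w ⊗ₜ g)))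
              ⊗ₜ vP)))
      = Theta aLN aRM aLP ((a ⊗ₜ w) ⊗ₜ ((n' ⊗ₜ g) ⊗ₜ vP)) := by
  induction w using TensorProduct.induction_on with
  | zero => simp
  | add x y hx hy => simp only [add_tmul, tmul_add, map_add, hx, hy]
  | tmul b m0 =>
    induction vP using TensorProduct.induction_on with
    | zero => simp
    | add x y hx hy => simp only [add_tmul, tmul_add, map_add, hx, hy]
    | tmul p' f => simp [Theta_tmul, tt]

/-- the right-hand side of the hexagon, generalized over `u = cLM m`, `vN = cRN n`. -/
lemma hex_lemB (aLN : H ⊗[k] N →ₗ[k] N) (aRM : M ⊗[k] H →ₗ[k] M) (aLP : H ⊗[k] P →ₗ[k] P)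
    (cLM : M →ₗ[k] H ⊗[k] M) (cRP : P →ₗ[k] P ⊗[k] H)
    (hLong : ∀ (m : M) (h : H), cLM (aRM (m ⊗ₜ h))
      = TensorProduct.map LinearMap.id aRM (TensorProduct.assoc k H M H (cLM m ⊗ₜ h)))
    (u : H ⊗[k] M) (vN : N ⊗[k] H) (p : P) :
    TensorProduct.map LinearMap.id (braid k H cLM aRM aLP cRP)
        (TensorProduct.assoc k N M P
          ((TensorProduct.map aLN aRM (tt k H M N H (u ⊗ₜ vN))) ⊗ₜ p))
      = Theta aLN aRM aLP
          ((TensorProduct.map LinearMap.id cLM u) ⊗ₜ (vN ⊗ₜ cRP p)) := by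
  induction u using TensorProduct.induction_on with
  | zero => simp
  | add x y hx hy => simp only [add_tmul, map_add, hx, hy]
  | tmul a m' =>
    induction vN using TensorProduct.induction_on with
    | zero => simp
    | add x y hx hy => simp only [add_tmul, tmul_add, map_add, hx, hy]
    | tmul n' g =>
      have h1 : tt k H M N H ((a ⊗ₜ[k] m') ⊗ₜ (n' ⊗ₜ g)) = (a ⊗ₜ n') ⊗ₜ (m' ⊗ₜ g) := by
        simp [tt]
      rw [h1]
      have h2 : TensorProduct.map aLN aRM ((a ⊗ₜ[k] n') ⊗ₜ (m' ⊗ₜ g))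
          = aLN (a ⊗ₜ n') ⊗ₜ aRM (m' ⊗ₜ g) := by simp
      rw [h2]
      have h3 : TensorProduct.assoc k N M P ((aLN (a ⊗ₜ[k] n') ⊗ₜ aRM (m' ⊗ₜ g)) ⊗ₜ p)
          = aLN (a ⊗ₜ n') ⊗ₜ (aRM (m' ⊗ₜ g) ⊗ₜ p) := by simp
      rw [h3]
      have h4 : TensorProduct.map (LinearMap.id (R := k)) (braid k H cLM aRM aLP cRP)
            (aLN (a ⊗ₜ[k] n') ⊗ₜ (aRM (m' ⊗ₜ g) ⊗ₜ p))
          = aLN (a ⊗ₜ n') ⊗ₜ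
              (TensorProduct.map aLP aRM
                (tt k H M P H
                  ((TensorProduct.map LinearMap.id aRM
                      (TensorProduct.assoc k H M H (cLM m' ⊗ₜ g))) ⊗ₜ cRP p))) := by
        simp [braid, hLong m' g]
      rw [h4, hex_lemB']
      simp

end HexagonAux

/-- the hexagon identity
`c_{M,N⊗P} = (id_N ⊗ c_{M,P}) ∘ (c_{M,N} ⊗ id_P)`. -/
theorem braid_hexagon
    {k : Type*} [CommRing k] {H : Type*} [Ring H] [Bialgebra k H]
    {M N P : Type*} [AddCommGroup M] [Module k M] [AddCommGroup N] [Module k N]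
    [AddCommGroup P] [Module k P]
    (aLM : H ⊗[k] M →ₗ[k] M) (aRM : M ⊗[k] H →ₗ[k] M)
    (cLM : M →ₗ[k] H ⊗[k] M) (cRM : M →ₗ[k] M ⊗[k] H)
    (aLN : H ⊗[k] N →ₗ[k] N) (aRN : N ⊗[k] H →ₗ[k] N)
    (cLN : N →ₗ[k] H ⊗[k] N) (cRN : N →ₗ[k] N ⊗[k] H)
    (aLP : H ⊗[k] P →ₗ[k] P) (aRP : P ⊗[k] H →ₗ[k] P)
    (cLP : P →ₗ[k] H ⊗[k] P) (cRP : P →ₗ[k] P ⊗[k] H)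
    (hM : IsLRObj k H aLM aRM cLM cRM) (hN : IsLRObj k H aLN aRN cLN cRN)
    (hP : IsLRObj k H aLP aRP cLP cRP) :
    ∀ x : M ⊗[k] (N ⊗[k] P),
      TensorProduct.assoc k N P M
          (braid k H cLM aRM (tActL k H aLN aLP) (tCoactR k H cRN cRP) x)
        = TensorProduct.map LinearMap.id (braid k H cLM aRM aLP cRP)
            (TensorProduct.assoc k N M P
              (TensorProduct.map (braid k H cLM aRM aLN cRN) LinearMap.id
                ((TensorProduct.assoc k M N P).symm x))) := by
  intro x
  induction x using TensorProduct.induction_on with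
  | zero => simp
  | add x y hx hy => simp only [map_add, hx, hy]
  | tmul m y =>
    induction y using TensorProduct.induction_on with
    | zero => simp
    | add x y hx hy => simp only [map_add, tmul_add, hx, hy]
    | tmul n p =>
      have hL : braid k H cLM aRM (tActL k H aLN aLP) (tCoactR k H cRN cRP) (m ⊗ₜ (n ⊗ₜ p))
          = TensorProduct.map (tActL k H aLN aLP) aRM
              (tt k H M (N ⊗[k] P) H
                (cLM m ⊗ₜ (TensorProduct.map LinearMap.id (μH k H)
                  (tt k N H P H (cRN n ⊗ₜ cRP p))))) := by
        simp [braid, tCoactR]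
      rw [hL, hex_lemA aLN aRM aLP hM.1.2.1.2]
      have hsymm : (TensorProduct.assoc k M N P).symm (m ⊗ₜ (n ⊗ₜ p)) = (m ⊗ₜ n) ⊗ₜ p := by
        simp
      rw [hsymm]
      have hbr : TensorProduct.map (braid k H cLM aRM aLN cRN) LinearMap.id
            ((m ⊗ₜ[k] n) ⊗ₜ[k] p)
          = (TensorProduct.map aLN aRM (tt k H M N H (cLM m ⊗ₜ cRN n))) ⊗ₜ p := by
        simp [braid]
      rw [hbr, hex_lemB aLN aRM aLP cLM cRP hM.2.2.2.2.2]
      rw [hM.2.1.1.2 m]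
      simp [asl]

end LRPaper
end
end

section
/- Let H be a Hopf algebra with invertible antipode S (so S⁻¹ exists) and M, N objects of LR(H). Then the map c_{M,N}: M ⊗ N → N ⊗ M, c_{M,N}(m ⊗ n) = m^{(-1)}·n^{<0>} ⊗ m^{(0)}·n^{<1>}, is bijective, with inverse c_{M,N}⁻¹(n ⊗ m) = m^{(0)}·S⁻¹(n^{<1>}) ⊗ S⁻¹(m^{(-1)})·n^{<0>}. -/
open TensorProduct
noncomputable section
namespace LRPaper


section AntipodeAux
variable {k : Type*} [CommRing k] {H : Type*} [Ring H] [HopfAlgebra k H]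
lemma antipode_one'' : HopfAlgebra.antipode (R := k) (1 : H) = 1 := by
  have := HopfAlgebra.mul_antipode_rTensor_comul_apply (R := k) (A := H) 1
  simpa [Algebra.TensorProduct.one_def] using this

/-- convolution product -/
def cnv {C : Type*} [AddCommGroup C] [Module k C] (Δc : C →ₗ[k] C ⊗[k] C)
    (f g : C →ₗ[k] H) : C →ₗ[k] H :=
  LinearMap.mul' k H ∘ₗ TensorProduct.map f g ∘ₗ Δc

lemma cnv_assoc {C : Type*} [AddCommGroup C] [Module k C] (Δc : C →ₗ[k] C ⊗[k] C)
    (hco : (TensorProduct.assoc k C C C).toLinearMap ∘ₗ Δc.rTensor C ∘ₗ Δc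
      = Δc.lTensor C ∘ₗ Δc)
    (f g h : C →ₗ[k] H) : cnv Δc (cnv Δc f g) h = cnv Δc f (cnv Δc g h) := by
  have e1 : TensorProduct.map (LinearMap.mul' k H ∘ₗ TensorProduct.map f g ∘ₗ Δc) h
      = TensorProduct.map (LinearMap.mul' k H ∘ₗ TensorProduct.map f g) h ∘ₗ Δc.rTensor C := by
    ext x y; simp [cnv]
  have e2 : TensorProduct.map f (LinearMap.mul' k H ∘ₗ TensorProduct.map g h ∘ₗ Δc)
      = TensorProduct.map f (LinearMap.mul' k H ∘ₗ TensorProduct.map g h) ∘ₗ Δc.lTensor C := by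
    ext x y; simp [cnv]
  have key : LinearMap.mul' k H ∘ₗ TensorProduct.map (LinearMap.mul' k H ∘ₗ TensorProduct.map f g) h
      = (LinearMap.mul' k H ∘ₗ TensorProduct.map f (LinearMap.mul' k H ∘ₗ TensorProduct.map g h))
        ∘ₗ (TensorProduct.assoc k C C C).toLinearMap := by
    ext x y z; simp [mul_assoc]
  calc cnv Δc (cnv Δc f g) h
      = LinearMap.mul' k H ∘ₗ TensorProduct.map (LinearMap.mul' k H ∘ₗ TensorProduct.map f g) h
          ∘ₗ (Δc.rTensor C ∘ₗ Δc) := by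
        simp only [cnv]; rw [e1]; simp only [LinearMap.comp_assoc]
    _ = (LinearMap.mul' k H ∘ₗ TensorProduct.map f (LinearMap.mul' k H ∘ₗ TensorProduct.map g h))
          ∘ₗ ((TensorProduct.assoc k C C C).toLinearMap ∘ₗ Δc.rTensor C ∘ₗ Δc) := by
        rw [← LinearMap.comp_assoc, key]; simp only [LinearMap.comp_assoc]
    _ = cnv Δc f (cnv Δc g h) := by
        rw [hco]; simp only [cnv]; rw [e2]; simp only [LinearMap.comp_assoc]

lemma cnv_unit_right {C : Type*} [AddCommGroup C] [Module k C] (Δc : C →ₗ[k] C ⊗[k] C)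
    (εc : C →ₗ[k] k)
    (hcu : εc.lTensor C ∘ₗ Δc = (TensorProduct.mk k C k).flip 1)
    (f : C →ₗ[k] H) : cnv Δc f (Algebra.linearMap k H ∘ₗ εc) = f := by
  have e1 : TensorProduct.map f (Algebra.linearMap k H ∘ₗ εc)
      = TensorProduct.map f (Algebra.linearMap k H) ∘ₗ εc.lTensor C := by
    ext x y; simp
  apply LinearMap.ext; intro c
  have : (εc.lTensor C ∘ₗ Δc) c = c ⊗ₜ (1 : k) := by rw [hcu]; rfl
  simp only [cnv, LinearMap.comp_apply, e1]
  rw [LinearMap.comp_apply] at this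
  rw [this]
  simp [Algebra.smul_def]

lemma cnv_unit_left {C : Type*} [AddCommGroup C] [Module k C] (Δc : C →ₗ[k] C ⊗[k] C)
    (εc : C →ₗ[k] k)
    (hcu : εc.rTensor C ∘ₗ Δc = TensorProduct.mk k k C 1)
    (f : C →ₗ[k] H) : cnv Δc (Algebra.linearMap k H ∘ₗ εc) f = f := by
  have e1 : TensorProduct.map (Algebra.linearMap k H ∘ₗ εc) f
      = TensorProduct.map (Algebra.linearMap k H) f ∘ₗ εc.rTensor C := by
    ext x y; simp
  apply LinearMap.ext; intro c
  have : (εc.rTensor C ∘ₗ Δc) c = (1 : k) ⊗ₜ c := by rw [hcu]; rfl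
  simp only [cnv, LinearMap.comp_apply, e1]
  rw [LinearMap.comp_apply] at this
  rw [this]
  simp [Algebra.smul_def]


/-- comultiplication on `H ⊗ H` -/
def D2 (k H : Type*) [CommRing k] [Ring H] [HopfAlgebra k H] :
    H ⊗[k] H →ₗ[k] (H ⊗[k] H) ⊗[k] (H ⊗[k] H) :=
  (TensorProduct.tensorTensorTensorComm k H H H H).toLinearMap
    ∘ₗ TensorProduct.map (Coalgebra.comul (R := k)) (Coalgebra.comul (R := k))

/-- counit on `H ⊗ H` -/
def E2 (k H : Type*) [CommRing k] [Ring H] [HopfAlgebra k H] : H ⊗[k] H →ₗ[k] k :=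
  LinearMap.mul' k k ∘ₗ TensorProduct.map (Coalgebra.counit (R := k)) (Coalgebra.counit (R := k))

lemma D2_apply (x y : H) :
    D2 k H (x ⊗ₜ y) = TensorProduct.tensorTensorTensorComm k H H H H
      (Coalgebra.comul (R := k) x ⊗ₜ Coalgebra.comul (R := k) y) := by
  simp [D2]

lemma E2_counit_r :
    (E2 k H).rTensor (H ⊗[k] H) ∘ₗ D2 k H = TensorProduct.mk k k (H ⊗[k] H) 1 := by
  have h1 : (E2 k H).rTensor (H ⊗[k] H)
        ∘ₗ (TensorProduct.tensorTensorTensorComm k H H H H).toLinearMap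
      = (TensorProduct.map (LinearMap.mul' k k) LinearMap.id
          ∘ₗ (TensorProduct.tensorTensorTensorComm k k H k H).toLinearMap)
        ∘ₗ TensorProduct.map ((Coalgebra.counit (R := k)).rTensor H)
            ((Coalgebra.counit (R := k)).rTensor H) := by
    ext a b c d
    simp [E2]
  apply TensorProduct.ext'
  intro x y
  have h2 := LinearMap.congr_fun h1
    (Coalgebra.comul (R := k) x ⊗ₜ Coalgebra.comul (R := k) y)
  simp only [LinearMap.comp_apply, TensorProduct.map_tmul, LinearEquiv.coe_coe] at h2
  simp only [LinearMap.comp_apply, D2_apply, h2, Coalgebra.rTensor_counit_comul]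
  simp

lemma E2_counit_l :
    (E2 k H).lTensor (H ⊗[k] H) ∘ₗ D2 k H = (TensorProduct.mk k (H ⊗[k] H) k).flip 1 := by
  have h1 : (E2 k H).lTensor (H ⊗[k] H)
        ∘ₗ (TensorProduct.tensorTensorTensorComm k H H H H).toLinearMap
      = (TensorProduct.map LinearMap.id (LinearMap.mul' k k)
          ∘ₗ (TensorProduct.tensorTensorTensorComm k H k H k).toLinearMap)
        ∘ₗ TensorProduct.map ((Coalgebra.counit (R := k)).lTensor H)
            ((Coalgebra.counit (R := k)).lTensor H) := by
    ext a b c d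
    simp [E2]
  apply TensorProduct.ext'
  intro x y
  have h2 := LinearMap.congr_fun h1
    (Coalgebra.comul (R := k) x ⊗ₜ Coalgebra.comul (R := k) y)
  simp only [LinearMap.comp_apply, TensorProduct.map_tmul, LinearEquiv.coe_coe] at h2
  simp only [LinearMap.comp_apply, D2_apply, h2, Coalgebra.lTensor_counit_comul]
  simp

lemma D2_coassoc :
    (TensorProduct.assoc k (H ⊗[k] H) (H ⊗[k] H) (H ⊗[k] H)).toLinearMap
        ∘ₗ (D2 k H).rTensor (H ⊗[k] H) ∘ₗ D2 k H
      = (D2 k H).lTensor (H ⊗[k] H) ∘ₗ D2 k H := by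
  have helpA : (D2 k H).rTensor (H ⊗[k] H)
        ∘ₗ (TensorProduct.tensorTensorTensorComm k H H H H).toLinearMap
      = ((TensorProduct.tensorTensorTensorComm k H H H H).toLinearMap).rTensor (H ⊗[k] H)
        ∘ₗ (TensorProduct.tensorTensorTensorComm k (H ⊗[k] H) H (H ⊗[k] H) H).toLinearMap
        ∘ₗ TensorProduct.map ((Coalgebra.comul (R := k)).rTensor H)
            ((Coalgebra.comul (R := k)).rTensor H) := by
    ext a b c d
    simp [D2]
  have helpB : (D2 k H).lTensor (H ⊗[k] H)
        ∘ₗ (TensorProduct.tensorTensorTensorComm k H H H H).toLinearMap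
      = ((TensorProduct.tensorTensorTensorComm k H H H H).toLinearMap).lTensor (H ⊗[k] H)
        ∘ₗ (TensorProduct.tensorTensorTensorComm k H (H ⊗[k] H) H (H ⊗[k] H)).toLinearMap
        ∘ₗ TensorProduct.map ((Coalgebra.comul (R := k)).lTensor H)
            ((Coalgebra.comul (R := k)).lTensor H) := by
    ext a b c d
    simp [D2]
  have helpC : (TensorProduct.assoc k (H ⊗[k] H) (H ⊗[k] H) (H ⊗[k] H)).toLinearMap
        ∘ₗ ((TensorProduct.tensorTensorTensorComm k H H H H).toLinearMap).rTensor (H ⊗[k] H)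
        ∘ₗ (TensorProduct.tensorTensorTensorComm k (H ⊗[k] H) H (H ⊗[k] H) H).toLinearMap
        ∘ₗ TensorProduct.map ((TensorProduct.assoc k H H H).symm.toLinearMap)
            ((TensorProduct.assoc k H H H).symm.toLinearMap)
      = ((TensorProduct.tensorTensorTensorComm k H H H H).toLinearMap).lTensor (H ⊗[k] H)
        ∘ₗ (TensorProduct.tensorTensorTensorComm k H (H ⊗[k] H) H (H ⊗[k] H)).toLinearMap := by
    ext a x1 x2 b y1 y2
    simp
  apply TensorProduct.ext'
  intro x y
  simp only [LinearMap.comp_apply, D2_apply]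
  have hA := LinearMap.congr_fun helpA
    (Coalgebra.comul (R := k) x ⊗ₜ Coalgebra.comul (R := k) y)
  have hB := LinearMap.congr_fun helpB
    (Coalgebra.comul (R := k) x ⊗ₜ Coalgebra.comul (R := k) y)
  simp only [LinearMap.comp_apply, TensorProduct.map_tmul, LinearEquiv.coe_coe] at hA hB
  rw [hA, hB]
  rw [← Coalgebra.coassoc_symm_apply (R := k) x, ← Coalgebra.coassoc_symm_apply (R := k) y]
  have hC := LinearMap.congr_fun helpC
    (((Coalgebra.comul (R := k)).lTensor H) (Coalgebra.comul (R := k) x)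
      ⊗ₜ ((Coalgebra.comul (R := k)).lTensor H) (Coalgebra.comul (R := k) y))
  simp only [LinearMap.comp_apply, TensorProduct.map_tmul, LinearEquiv.coe_coe] at hC
  exact hC


lemma mulmul_ttc :
    TensorProduct.map (LinearMap.mul' k H) (LinearMap.mul' k H)
        ∘ₗ (TensorProduct.tensorTensorTensorComm k H H H H).toLinearMap
      = LinearMap.mul' k (H ⊗[k] H) := by
  ext a b c d
  simp [Algebra.TensorProduct.tmul_mul_tmul]

lemma comul_mul_map :
    LinearMap.mul' k (H ⊗[k] H) ∘ₗ TensorProduct.map (Coalgebra.comul (R := k) (A := H))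
        (Coalgebra.comul (R := k) (A := H))
      = Coalgebra.comul (R := k) ∘ₗ LinearMap.mul' k H := by
  ext x y
  simp [Bialgebra.comul_mul]

lemma counit_mul_map :
    (Coalgebra.counit (R := k) (A := H)) ∘ₗ LinearMap.mul' k H = E2 k H := by
  ext x y
  simp [E2, Bialgebra.counit_mul]

lemma cnv_GM : cnv (D2 k H) (HopfAlgebra.antipode (R := k) ∘ₗ LinearMap.mul' k H)
      (LinearMap.mul' k H)
    = Algebra.linearMap k H ∘ₗ E2 k H := by
  have helpGM : LinearMap.mul' k H
        ∘ₗ TensorProduct.map (HopfAlgebra.antipode (R := k) ∘ₗ LinearMap.mul' k H)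
            (LinearMap.mul' k H)
        ∘ₗ (TensorProduct.tensorTensorTensorComm k H H H H).toLinearMap
      = LinearMap.mul' k H ∘ₗ (HopfAlgebra.antipode (R := k)).rTensor H
          ∘ₗ LinearMap.mul' k (H ⊗[k] H) := by
    ext a b c d
    simp [Algebra.TensorProduct.tmul_mul_tmul]
  apply TensorProduct.ext'
  intro x y
  have h1 := LinearMap.congr_fun helpGM
    (Coalgebra.comul (R := k) x ⊗ₜ Coalgebra.comul (R := k) y)
  simp only [LinearMap.comp_apply, LinearEquiv.coe_coe] at h1
  have h2 := LinearMap.congr_fun (comul_mul_map (k := k) (H := H)) (x ⊗ₜ y)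
  simp only [LinearMap.comp_apply, TensorProduct.map_tmul, LinearMap.mul'_apply] at h2
  simp only [cnv, LinearMap.comp_apply, D2_apply, LinearEquiv.coe_coe]
  rw [h1, LinearMap.mul'_apply, h2, HopfAlgebra.mul_antipode_rTensor_comul_apply]
  simp [E2, Bialgebra.counit_mul]

/-- `Ξ ((a ⊗ b) ⊗ z) = a * z * S b` -/
def Xi (k H : Type*) [CommRing k] [Ring H] [HopfAlgebra k H] :
    (H ⊗[k] H) ⊗[k] H →ₗ[k] H :=
  LinearMap.mul' k H
    ∘ₗ TensorProduct.map (LinearMap.mul' k H) (HopfAlgebra.antipode (R := k))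
    ∘ₗ (TensorProduct.assoc k H H H).symm.toLinearMap
    ∘ₗ LinearMap.lTensor H (TensorProduct.comm k H H).toLinearMap
    ∘ₗ (TensorProduct.assoc k H H H).toLinearMap

lemma Xi_apply (a b z : H) : Xi k H ((a ⊗ₜ b) ⊗ₜ z)
    = a * z * HopfAlgebra.antipode (R := k) b := by
  simp [Xi]

lemma cnv_MF : cnv (D2 k H) (LinearMap.mul' k H)
      (LinearMap.mul' k H ∘ₗ TensorProduct.map (HopfAlgebra.antipode (R := k))
        (HopfAlgebra.antipode (R := k)) ∘ₗ (TensorProduct.comm k H H).toLinearMap)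
    = Algebra.linearMap k H ∘ₗ E2 k H := by
  have helpMF : LinearMap.mul' k H
        ∘ₗ TensorProduct.map (LinearMap.mul' k H)
            (LinearMap.mul' k H ∘ₗ TensorProduct.map (HopfAlgebra.antipode (R := k))
              (HopfAlgebra.antipode (R := k)) ∘ₗ (TensorProduct.comm k H H).toLinearMap)
        ∘ₗ (TensorProduct.tensorTensorTensorComm k H H H H).toLinearMap
      = Xi k H ∘ₗ TensorProduct.map LinearMap.id
          (LinearMap.mul' k H ∘ₗ (HopfAlgebra.antipode (R := k)).lTensor H) := by
    ext a b c d
    simp [Xi, mul_assoc]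
  have helpXi : ∀ w : H ⊗[k] H, Xi k H (w ⊗ₜ (1 : H))
      = LinearMap.mul' k H ((HopfAlgebra.antipode (R := k)).lTensor H w) := by
    intro w
    induction w using TensorProduct.induction_on with
    | zero => simp
    | add u v hu hv => rw [add_tmul]; simp only [map_add, hu, hv]
    | tmul a b => simp [Xi_apply]
  apply TensorProduct.ext'
  intro x y
  have h1 := LinearMap.congr_fun helpMF
    (Coalgebra.comul (R := k) x ⊗ₜ Coalgebra.comul (R := k) y)
  simp only [LinearMap.comp_apply, LinearEquiv.coe_coe, TensorProduct.map_tmul,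
    LinearMap.id_coe, id_eq] at h1
  simp only [cnv, LinearMap.comp_apply, D2_apply, LinearEquiv.coe_coe]
  rw [h1]
  rw [HopfAlgebra.mul_antipode_lTensor_comul_apply (R := k) y]
  have : (Coalgebra.comul (R := k) x) ⊗ₜ[k] (algebraMap k H (Coalgebra.counit (R := k) y))
      = Coalgebra.counit (R := k) y • ((Coalgebra.comul (R := k) x) ⊗ₜ[k] (1 : H)) := by
    rw [Algebra.algebraMap_eq_smul_one, tmul_smul]
  rw [this, map_smul, helpXi]
  rw [HopfAlgebra.mul_antipode_lTensor_comul_apply (R := k) x]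
  simp only [E2, LinearMap.comp_apply, TensorProduct.map_tmul, LinearMap.mul'_apply,
    Algebra.algebraMap_eq_smul_one, smul_smul]
  rw [mul_comm]
  simp [Algebra.algebraMap_eq_smul_one]

theorem antipode_mul' (a b : H) :
    HopfAlgebra.antipode (R := k) (a * b)
      = HopfAlgebra.antipode (R := k) b * HopfAlgebra.antipode (R := k) a := by
  set G : H ⊗[k] H →ₗ[k] H := HopfAlgebra.antipode (R := k) ∘ₗ LinearMap.mul' k H with hG
  set Mm : H ⊗[k] H →ₗ[k] H := LinearMap.mul' k H with hMm
  set F : H ⊗[k] H →ₗ[k] H := LinearMap.mul' k H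
    ∘ₗ TensorProduct.map (HopfAlgebra.antipode (R := k)) (HopfAlgebra.antipode (R := k))
    ∘ₗ (TensorProduct.comm k H H).toLinearMap with hF
  have hGF : G = F := by
    have h1 : cnv (D2 k H) G Mm = Algebra.linearMap k H ∘ₗ E2 k H := cnv_GM
    have h2 : cnv (D2 k H) Mm F = Algebra.linearMap k H ∘ₗ E2 k H := cnv_MF
    calc G = cnv (D2 k H) G (Algebra.linearMap k H ∘ₗ E2 k H) :=
          (cnv_unit_right (D2 k H) (E2 k H) E2_counit_l G).symm
      _ = cnv (D2 k H) G (cnv (D2 k H) Mm F) := by rw [h2]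
      _ = cnv (D2 k H) (cnv (D2 k H) G Mm) F := (cnv_assoc (D2 k H) D2_coassoc G Mm F).symm
      _ = cnv (D2 k H) (Algebra.linearMap k H ∘ₗ E2 k H) F := by rw [h1]
      _ = F := cnv_unit_left (D2 k H) (E2 k H) E2_counit_r F
  have := LinearMap.congr_fun hGF (a ⊗ₜ b)
  simpa [hG, hMm, hF] using this


lemma antipode_injective' (T : H →ₗ[k] H)
    (hT1 : ∀ h : H, T (HopfAlgebra.antipode (R := k) h) = h) :
    Function.Injective (HopfAlgebra.antipode (R := k) (A := H)) := by
  intro x y hxy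
  rw [← hT1 x, hxy, hT1]

lemma skew_left (T : H →ₗ[k] H)
    (hT1 : ∀ h : H, T (HopfAlgebra.antipode (R := k) h) = h)
    (hT2 : ∀ h : H, HopfAlgebra.antipode (R := k) (T h) = h) (h : H) :
    LinearMap.mul' k H (TensorProduct.map T LinearMap.id
        ((TensorProduct.comm k H H) (Coalgebra.comul (R := k) h)))
      = Coalgebra.counit (R := k) h • (1 : H) := by
  apply antipode_injective' T hT1
  have key : ∀ w : H ⊗[k] H,
      HopfAlgebra.antipode (R := k)
        (LinearMap.mul' k H (TensorProduct.map T LinearMap.id ((TensorProduct.comm k H H) w)))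
      = LinearMap.mul' k H (TensorProduct.map (HopfAlgebra.antipode (R := k)) LinearMap.id w) := by
    intro w
    induction w using TensorProduct.induction_on with
    | zero => simp
    | add u v hu hv => simp only [map_add, hu, hv]
    | tmul a b => simp [antipode_mul', hT2]
  rw [key]
  have : TensorProduct.map (HopfAlgebra.antipode (R := k)) LinearMap.id
        (Coalgebra.comul (R := k) h)
      = (HopfAlgebra.antipode (R := k)).rTensor H (Coalgebra.comul (R := k) h) := rfl
  rw [this, HopfAlgebra.mul_antipode_rTensor_comul_apply]
  rw [map_smul, antipode_one'', Algebra.algebraMap_eq_smul_one]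

lemma skew_right (T : H →ₗ[k] H)
    (hT1 : ∀ h : H, T (HopfAlgebra.antipode (R := k) h) = h)
    (hT2 : ∀ h : H, HopfAlgebra.antipode (R := k) (T h) = h) (h : H) :
    LinearMap.mul' k H (TensorProduct.map LinearMap.id T
        ((TensorProduct.comm k H H) (Coalgebra.comul (R := k) h)))
      = Coalgebra.counit (R := k) h • (1 : H) := by
  apply antipode_injective' T hT1
  have key : ∀ w : H ⊗[k] H,
      HopfAlgebra.antipode (R := k)
        (LinearMap.mul' k H (TensorProduct.map LinearMap.id T ((TensorProduct.comm k H H) w)))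
      = LinearMap.mul' k H (TensorProduct.map LinearMap.id (HopfAlgebra.antipode (R := k)) w) := by
    intro w
    induction w using TensorProduct.induction_on with
    | zero => simp
    | add u v hu hv => simp only [map_add, hu, hv]
    | tmul a b => simp [antipode_mul', hT2]
  rw [key]
  have : TensorProduct.map LinearMap.id (HopfAlgebra.antipode (R := k))
        (Coalgebra.comul (R := k) h)
      = (HopfAlgebra.antipode (R := k)).lTensor H (Coalgebra.comul (R := k) h) := rfl
  rw [this, HopfAlgebra.mul_antipode_lTensor_comul_apply]
  rw [map_smul, antipode_one'', Algebra.algebraMap_eq_smul_one]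


end AntipodeAux

section NatAux
variable {k : Type*} [CommRing k]

lemma tt_nat {A B C D A' B' C' D' : Type*}
    [AddCommGroup A] [Module k A] [AddCommGroup B] [Module k B]
    [AddCommGroup C] [Module k C] [AddCommGroup D] [Module k D]
    [AddCommGroup A'] [Module k A'] [AddCommGroup B'] [Module k B']
    [AddCommGroup C'] [Module k C'] [AddCommGroup D'] [Module k D']
    (f : A →ₗ[k] A') (g : B →ₗ[k] B') (p : C →ₗ[k] C') (q : D →ₗ[k] D') :
    TensorProduct.map (TensorProduct.map f p) (TensorProduct.map g q) ∘ₗ tt k A B C D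
      = tt k A' B' C' D' ∘ₗ TensorProduct.map (TensorProduct.map f g) (TensorProduct.map p q) := by
  ext a b c d
  simp [tt]

lemma sw_nat {A B A' B' : Type*}
    [AddCommGroup A] [Module k A] [AddCommGroup B] [Module k B]
    [AddCommGroup A'] [Module k A'] [AddCommGroup B'] [Module k B']
    (f : A →ₗ[k] A') (g : B →ₗ[k] B') :
    TensorProduct.map f g ∘ₗ sw k B A = sw k B' A' ∘ₗ TensorProduct.map g f := by
  ext b a
  simp [sw]

lemma map_map_comm {A A' B B' : Type*}
    [AddCommGroup A] [Module k A] [AddCommGroup B] [Module k B]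
    [AddCommGroup A'] [Module k A'] [AddCommGroup B'] [Module k B']
    (f : A →ₗ[k] A') (g : B →ₗ[k] B') :
    TensorProduct.map f LinearMap.id ∘ₗ TensorProduct.map LinearMap.id g
      = TensorProduct.map LinearMap.id g ∘ₗ TensorProduct.map f LinearMap.id := by
  ext a b
  simp

end NatAux

/-- the candidate inverse braiding `n ⊗ m ↦ m⁽⁰⁾·S⁻¹(n⁽¹⁾) ⊗ S⁻¹(m⁽⁻¹⁾)·n⁽⁰⁾` -/
def braidInv {k : Type*} [CommRing k] (H : Type*) [Ring H] [Bialgebra k H]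
    {M N : Type*} [AddCommGroup M] [Module k M] [AddCommGroup N] [Module k N]
    (T : H →ₗ[k] H)
    (cLM : M →ₗ[k] H ⊗[k] M) (aRM : M ⊗[k] H →ₗ[k] M)
    (aLN : H ⊗[k] N →ₗ[k] N) (cRN : N →ₗ[k] N ⊗[k] H) :
    N ⊗[k] M →ₗ[k] M ⊗[k] N :=
  sw k N M ∘ₗ TensorProduct.map aLN aRM ∘ₗ tt k H M N H
    ∘ₗ sw k (N ⊗[k] H) (H ⊗[k] M)
    ∘ₗ TensorProduct.map (TensorProduct.map LinearMap.id T) (TensorProduct.map T LinearMap.id)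
    ∘ₗ TensorProduct.map cRN cLM

set_option maxHeartbeats 2000000 in
/-- over a Hopf algebra with bijective antipode, the braiding of LR(H)
is bijective with the stated inverse. -/
theorem braid_bijective
    {k : Type*} [CommRing k] {H : Type*} [Ring H] [HopfAlgebra k H]
    {M N : Type*} [AddCommGroup M] [Module k M] [AddCommGroup N] [Module k N]
    (T : H →ₗ[k] H)
    (hT1 : ∀ h : H, T (HopfAlgebra.antipode (R := k) h) = h)
    (hT2 : ∀ h : H, HopfAlgebra.antipode (R := k) (T h) = h)
    (aLM : H ⊗[k] M →ₗ[k] M) (aRM : M ⊗[k] H →ₗ[k] M)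
    (cLM : M →ₗ[k] H ⊗[k] M) (cRM : M →ₗ[k] M ⊗[k] H)
    (aLN : H ⊗[k] N →ₗ[k] N) (aRN : N ⊗[k] H →ₗ[k] N)
    (cLN : N →ₗ[k] H ⊗[k] N) (cRN : N →ₗ[k] N ⊗[k] H)
    (hM : IsLRObj k H aLM aRM cLM cRM) (hN : IsLRObj k H aLN aRN cLN cRN) :
    Function.Bijective (braid k H cLM aRM aLN cRN) ∧
    (∀ x : M ⊗[k] N,
      braidInv H T cLM aRM aLN cRN (braid k H cLM aRM aLN cRN x) = x) ∧
    (∀ y : N ⊗[k] M,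
      braid k H cLM aRM aLN cRN (braidInv H T cLM aRM aLN cRN y) = y) := by
  classical
  obtain ⟨⟨-, hMr, -⟩, ⟨hMlc, -, -⟩, -, -, -, hMlongrl⟩ := hM
  obtain ⟨⟨hNl, -, -⟩, ⟨-, hNrc, -⟩, -, hNlonglr, -, -⟩ := hN
  have skewL : ∀ h : H, (μH k H) (TensorProduct.map T LinearMap.id (sw k H H (δH k H h)))
      = (εH k H h) • (1 : H) := by
    intro h
    simpa [μH, δH, εH, sw] using skew_left T hT1 hT2 h
  have skewR : ∀ h : H, (μH k H) (TensorProduct.map LinearMap.id T (sw k H H (δH k H h)))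
      = (εH k H h) • (1 : H) := by
    intro h
    simpa [μH, δH, εH, sw] using skew_right T hT1 hT2 h
  have SA : (aLN ∘ₗ TensorProduct.map (μH k H ∘ₗ TensorProduct.map T LinearMap.id ∘ₗ sw k H H) LinearMap.id) ∘ₗ TensorProduct.map (δH k H) LinearMap.id = ((TensorProduct.lid k N).toLinearMap ∘ₗ TensorProduct.map (εH k H) LinearMap.id) := by
    apply TensorProduct.ext'
    intro h n
    simp only [LinearMap.comp_apply, TensorProduct.map_tmul, LinearMap.id_coe, id_eq]
    rw [skewL h]
    simp only [← TensorProduct.smul_tmul']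
    rw [map_smul, hNl.1 n]
    simp
  have SB : (aRM ∘ₗ TensorProduct.map LinearMap.id (μH k H ∘ₗ TensorProduct.map LinearMap.id T ∘ₗ sw k H H)) ∘ₗ TensorProduct.map LinearMap.id (δH k H) = ((TensorProduct.rid k M).toLinearMap ∘ₗ TensorProduct.map LinearMap.id (εH k H)) := by
    apply TensorProduct.ext'
    intro m h
    simp only [LinearMap.comp_apply, TensorProduct.map_tmul, LinearMap.id_coe, id_eq]
    rw [skewR h]
    simp [TensorProduct.tmul_smul, hMr.1 m]
  have SC : (aLN ∘ₗ TensorProduct.map (μH k H ∘ₗ TensorProduct.map LinearMap.id T ∘ₗ sw k H H) LinearMap.id) ∘ₗ TensorProduct.map (δH k H) LinearMap.id = ((TensorProduct.lid k N).toLinearMap ∘ₗ TensorProduct.map (εH k H) LinearMap.id) := by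
    apply TensorProduct.ext'
    intro h n
    simp only [LinearMap.comp_apply, TensorProduct.map_tmul, LinearMap.id_coe, id_eq]
    rw [skewR h]
    simp only [← TensorProduct.smul_tmul']
    rw [map_smul, hNl.1 n]
    simp
  have SD : (aRM ∘ₗ TensorProduct.map LinearMap.id (μH k H ∘ₗ TensorProduct.map T LinearMap.id ∘ₗ sw k H H)) ∘ₗ TensorProduct.map LinearMap.id (δH k H) = ((TensorProduct.rid k M).toLinearMap ∘ₗ TensorProduct.map LinearMap.id (εH k H)) := by
    apply TensorProduct.ext'
    intro m h
    simp only [LinearMap.comp_apply, TensorProduct.map_tmul, LinearMap.id_coe, id_eq]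
    rw [skewL h]
    simp [TensorProduct.tmul_smul, hMr.1 m]
  have h1 : TensorProduct.map cRN cLM ∘ₗ TensorProduct.map aLN aRM
      = TensorProduct.map (TensorProduct.map aLN LinearMap.id ∘ₗ asr k H N H) (TensorProduct.map LinearMap.id aRM ∘ₗ asl k H M H)
        ∘ₗ TensorProduct.map (TensorProduct.map LinearMap.id cRN)
            (TensorProduct.map cLM LinearMap.id) := by
    ext h n m' g'
    simp only [TensorProduct.AlgebraTensorModule.curry_apply, TensorProduct.curry_apply,
      LinearMap.coe_restrictScalars, LinearMap.comp_apply, TensorProduct.map_tmul,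
      LinearMap.id_coe, id_eq]
    rw [hNlonglr h n, hMlongrl m' g']
    simp [asr, asl]
  have C2 : sw k N M ∘ₗ TensorProduct.map aLN aRM ∘ₗ tt k H M N H
        ∘ₗ sw k (N ⊗[k] H) (H ⊗[k] M)
        ∘ₗ TensorProduct.map (TensorProduct.map LinearMap.id T) (TensorProduct.map T LinearMap.id)
        ∘ₗ TensorProduct.map (TensorProduct.map aLN LinearMap.id ∘ₗ asr k H N H) (TensorProduct.map LinearMap.id aRM ∘ₗ asl k H M H)
        ∘ₗ tt k H (H ⊗[k] M) (N ⊗[k] H) H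
        ∘ₗ TensorProduct.map (asl k H H M) (asr k N H H)
      = sw k N M ∘ₗ TensorProduct.map (aLN ∘ₗ TensorProduct.map (μH k H ∘ₗ TensorProduct.map T LinearMap.id ∘ₗ sw k H H) LinearMap.id) (aRM ∘ₗ TensorProduct.map LinearMap.id (μH k H ∘ₗ TensorProduct.map LinearMap.id T ∘ₗ sw k H H)) ∘ₗ tt k (H ⊗[k] H) M N (H ⊗[k] H) := by
    ext h1' h2' m1 n1 g1' g2'
    simp [tt, asl, asr, sw, μH, hMr.2, hNl.2]
  have C2' : TensorProduct.map aLN aRM ∘ₗ tt k H M N H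
        ∘ₗ sw k (N ⊗[k] H) (H ⊗[k] M)
        ∘ₗ TensorProduct.map (TensorProduct.map aLN LinearMap.id ∘ₗ asr k H N H) (TensorProduct.map LinearMap.id aRM ∘ₗ asl k H M H)
        ∘ₗ tt k H (H ⊗[k] M) (N ⊗[k] H) H
        ∘ₗ TensorProduct.map (TensorProduct.map T LinearMap.id ∘ₗ asl k H H M)
            (TensorProduct.map LinearMap.id T ∘ₗ asr k N H H)
      = TensorProduct.map (aLN ∘ₗ TensorProduct.map (μH k H ∘ₗ TensorProduct.map LinearMap.id T ∘ₗ sw k H H) LinearMap.id) (aRM ∘ₗ TensorProduct.map LinearMap.id (μH k H ∘ₗ TensorProduct.map T LinearMap.id ∘ₗ sw k H H)) ∘ₗ tt k (H ⊗[k] H) M N (H ⊗[k] H) := by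
    ext h1' h2' m1 n1 g1' g2'
    simp [tt, asl, asr, sw, μH, hMr.2, hNl.2]
  have Cfin : TensorProduct.map ((TensorProduct.lid k N).toLinearMap ∘ₗ TensorProduct.map (εH k H) LinearMap.id) ((TensorProduct.rid k M).toLinearMap ∘ₗ TensorProduct.map LinearMap.id (εH k H)) ∘ₗ tt k H M N H
      = sw k M N ∘ₗ TensorProduct.map ((TensorProduct.lid k M).toLinearMap ∘ₗ TensorProduct.map (εH k H) LinearMap.id) ((TensorProduct.rid k N).toLinearMap ∘ₗ TensorProduct.map LinearMap.id (εH k H)) := by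
    ext h m1 n1 g
    simp [tt, sw, εH, TensorProduct.smul_tmul, TensorProduct.tmul_smul, smul_smul, mul_comm]
  have dir1 : ∀ (m : M) (n : N),
      braidInv H T cLM aRM aLN cRN (braid k H cLM aRM aLN cRN (m ⊗ₜ[k] n)) = m ⊗ₜ[k] n := by
    intro m n
    have hcoaM : TensorProduct.map LinearMap.id cLM (cLM m) = asl k H H M (TensorProduct.map (δH k H) LinearMap.id (cLM m)) := by
      simpa [asl] using hMlc.2 m
    have hcoaN : TensorProduct.map cRN LinearMap.id (cRN n) = asr k N H H (TensorProduct.map LinearMap.id (δH k H) (cRN n)) := by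
      simpa [asr] using hNrc.2 n
    have finM : ((TensorProduct.lid k M).toLinearMap ∘ₗ TensorProduct.map (εH k H) LinearMap.id) (cLM m) = m := by simpa using hMlc.1 m
    have finN : ((TensorProduct.rid k N).toLinearMap ∘ₗ TensorProduct.map LinearMap.id (εH k H)) (cRN n) = n := by simpa using hNrc.1 n
    simp only [braid, braidInv, LinearMap.comp_apply, TensorProduct.map_tmul]
    have s1 := LinearMap.congr_fun h1 (tt k H M N H (cLM m ⊗ₜ[k] cRN n))
    simp only [LinearMap.comp_apply] at s1
    rw [s1]
    have s2 := LinearMap.congr_fun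
      (tt_nat (k := k) LinearMap.id cLM cRN LinearMap.id) (cLM m ⊗ₜ[k] cRN n)
    simp only [LinearMap.comp_apply] at s2
    rw [s2]
    rw [show TensorProduct.map (TensorProduct.map LinearMap.id cLM)
          (TensorProduct.map cRN LinearMap.id) (cLM m ⊗ₜ[k] cRN n)
        = TensorProduct.map LinearMap.id cLM (cLM m)
            ⊗ₜ[k] TensorProduct.map cRN LinearMap.id (cRN n) from
      TensorProduct.map_tmul _ _ _ _]
    rw [hcoaM, hcoaN]
    rw [show asl k H H M (TensorProduct.map (δH k H) LinearMap.id (cLM m)) ⊗ₜ[k] asr k N H H (TensorProduct.map LinearMap.id (δH k H) (cRN n))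
        = TensorProduct.map (asl k H H M) (asr k N H H) ((TensorProduct.map (δH k H) LinearMap.id (cLM m)) ⊗ₜ[k] (TensorProduct.map LinearMap.id (δH k H) (cRN n))) from
      (TensorProduct.map_tmul _ _ _ _).symm]
    have s3 := LinearMap.congr_fun C2 ((TensorProduct.map (δH k H) LinearMap.id (cLM m)) ⊗ₜ[k] (TensorProduct.map LinearMap.id (δH k H) (cRN n)))
    simp only [LinearMap.comp_apply] at s3
    rw [s3]
    rw [show (TensorProduct.map (δH k H) LinearMap.id (cLM m)) ⊗ₜ[k] (TensorProduct.map LinearMap.id (δH k H) (cRN n))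
        = TensorProduct.map (TensorProduct.map (δH k H) LinearMap.id)
            (TensorProduct.map LinearMap.id (δH k H)) (cLM m ⊗ₜ[k] cRN n) from
      (TensorProduct.map_tmul _ _ _ _).symm]
    have s4 := LinearMap.congr_fun
      (tt_nat (k := k) (δH k H) LinearMap.id LinearMap.id (δH k H)) (cLM m ⊗ₜ[k] cRN n)
    simp only [LinearMap.comp_apply] at s4
    rw [← s4]
    have hQ : TensorProduct.map (aLN ∘ₗ TensorProduct.map (μH k H ∘ₗ TensorProduct.map T LinearMap.id ∘ₗ sw k H H) LinearMap.id) (aRM ∘ₗ TensorProduct.map LinearMap.id (μH k H ∘ₗ TensorProduct.map LinearMap.id T ∘ₗ sw k H H))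
          ∘ₗ TensorProduct.map (TensorProduct.map (δH k H) LinearMap.id)
              (TensorProduct.map LinearMap.id (δH k H))
        = TensorProduct.map ((TensorProduct.lid k N).toLinearMap ∘ₗ TensorProduct.map (εH k H) LinearMap.id) ((TensorProduct.rid k M).toLinearMap ∘ₗ TensorProduct.map LinearMap.id (εH k H)) := by
      rw [← TensorProduct.map_comp, SA, SB]
    have s5 := LinearMap.congr_fun hQ (tt k H M N H (cLM m ⊗ₜ[k] cRN n))
    simp only [LinearMap.comp_apply] at s5
    rw [s5]
    have s6 := LinearMap.congr_fun Cfin (cLM m ⊗ₜ[k] cRN n)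
    simp only [LinearMap.comp_apply] at s6
    rw [s6]
    rw [show TensorProduct.map ((TensorProduct.lid k M).toLinearMap ∘ₗ TensorProduct.map (εH k H) LinearMap.id) ((TensorProduct.rid k N).toLinearMap ∘ₗ TensorProduct.map LinearMap.id (εH k H)) (cLM m ⊗ₜ[k] cRN n) = ((TensorProduct.lid k M).toLinearMap ∘ₗ TensorProduct.map (εH k H) LinearMap.id) (cLM m) ⊗ₜ[k] ((TensorProduct.rid k N).toLinearMap ∘ₗ TensorProduct.map LinearMap.id (εH k H)) (cRN n) from
      TensorProduct.map_tmul _ _ _ _]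
    rw [finM, finN]
    simp [sw]
  have dir2 : ∀ (n : N) (m : M),
      braid k H cLM aRM aLN cRN (braidInv H T cLM aRM aLN cRN (n ⊗ₜ[k] m)) = n ⊗ₜ[k] m := by
    intro n m
    have hcoaM : TensorProduct.map LinearMap.id cLM (cLM m) = asl k H H M (TensorProduct.map (δH k H) LinearMap.id (cLM m)) := by
      simpa [asl] using hMlc.2 m
    have hcoaN : TensorProduct.map cRN LinearMap.id (cRN n) = asr k N H H (TensorProduct.map LinearMap.id (δH k H) (cRN n)) := by
      simpa [asr] using hNrc.2 n
    have finM : ((TensorProduct.lid k M).toLinearMap ∘ₗ TensorProduct.map (εH k H) LinearMap.id) (cLM m) = m := by simpa using hMlc.1 m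
    have finN : ((TensorProduct.rid k N).toLinearMap ∘ₗ TensorProduct.map LinearMap.id (εH k H)) (cRN n) = n := by simpa using hNrc.1 n
    simp only [braid, braidInv, LinearMap.comp_apply, TensorProduct.map_tmul]
    rw [show sw k (N ⊗[k] H) (H ⊗[k] M)
          (TensorProduct.map LinearMap.id T (cRN n) ⊗ₜ[k] TensorProduct.map T LinearMap.id (cLM m))
        = TensorProduct.map T LinearMap.id (cLM m) ⊗ₜ[k] TensorProduct.map LinearMap.id T (cRN n)
        from by simp [sw]]
    have t1 := LinearMap.congr_fun (sw_nat (k := k) cLM cRN)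
      (TensorProduct.map aLN aRM (tt k H M N H (TensorProduct.map T LinearMap.id (cLM m) ⊗ₜ[k] TensorProduct.map LinearMap.id T (cRN n))))
    simp only [LinearMap.comp_apply] at t1
    rw [t1]
    have t2 := LinearMap.congr_fun h1 (tt k H M N H (TensorProduct.map T LinearMap.id (cLM m) ⊗ₜ[k] TensorProduct.map LinearMap.id T (cRN n)))
    simp only [LinearMap.comp_apply] at t2
    rw [t2]
    have t3 := LinearMap.congr_fun
      (tt_nat (k := k) LinearMap.id cLM cRN LinearMap.id) (TensorProduct.map T LinearMap.id (cLM m) ⊗ₜ[k] TensorProduct.map LinearMap.id T (cRN n))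
    simp only [LinearMap.comp_apply] at t3
    rw [t3]
    rw [show TensorProduct.map (TensorProduct.map LinearMap.id cLM)
          (TensorProduct.map cRN LinearMap.id) (TensorProduct.map T LinearMap.id (cLM m) ⊗ₜ[k] TensorProduct.map LinearMap.id T (cRN n))
        = TensorProduct.map LinearMap.id cLM (TensorProduct.map T LinearMap.id (cLM m))
            ⊗ₜ[k] TensorProduct.map cRN LinearMap.id (TensorProduct.map LinearMap.id T (cRN n)) from
      TensorProduct.map_tmul _ _ _ _]
    have cm2 : TensorProduct.map LinearMap.id cLM (TensorProduct.map T LinearMap.id (cLM m))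
        = TensorProduct.map T LinearMap.id (asl k H H M (TensorProduct.map (δH k H) LinearMap.id (cLM m))) := by
      have hc := LinearMap.congr_fun (map_map_comm (k := k) T cLM) (cLM m)
      simp only [LinearMap.comp_apply] at hc
      calc TensorProduct.map LinearMap.id cLM (TensorProduct.map T LinearMap.id (cLM m))
          = TensorProduct.map T LinearMap.id (TensorProduct.map LinearMap.id cLM (cLM m)) :=
            hc.symm
        _ = TensorProduct.map T LinearMap.id (asl k H H M (TensorProduct.map (δH k H) LinearMap.id (cLM m))) := by rw [hcoaM]
    have cn2 : TensorProduct.map cRN LinearMap.id (TensorProduct.map LinearMap.id T (cRN n))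
        = TensorProduct.map LinearMap.id T (asr k N H H (TensorProduct.map LinearMap.id (δH k H) (cRN n))) := by
      have hc := LinearMap.congr_fun (map_map_comm (k := k) cRN T) (cRN n)
      simp only [LinearMap.comp_apply] at hc
      calc TensorProduct.map cRN LinearMap.id (TensorProduct.map LinearMap.id T (cRN n))
          = TensorProduct.map LinearMap.id T (TensorProduct.map cRN LinearMap.id (cRN n)) := hc
        _ = TensorProduct.map LinearMap.id T (asr k N H H (TensorProduct.map LinearMap.id (δH k H) (cRN n))) := by rw [hcoaN]
    rw [cm2, cn2]
    rw [show TensorProduct.map T LinearMap.id (asl k H H M (TensorProduct.map (δH k H) LinearMap.id (cLM m)))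
          ⊗ₜ[k] TensorProduct.map LinearMap.id T (asr k N H H (TensorProduct.map LinearMap.id (δH k H) (cRN n)))
        = TensorProduct.map (TensorProduct.map T LinearMap.id ∘ₗ asl k H H M)
            (TensorProduct.map LinearMap.id T ∘ₗ asr k N H H) ((TensorProduct.map (δH k H) LinearMap.id (cLM m)) ⊗ₜ[k] (TensorProduct.map LinearMap.id (δH k H) (cRN n))) from by
      simp only [TensorProduct.map_tmul, LinearMap.comp_apply]]
    have t4 := LinearMap.congr_fun C2' ((TensorProduct.map (δH k H) LinearMap.id (cLM m)) ⊗ₜ[k] (TensorProduct.map LinearMap.id (δH k H) (cRN n)))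
    simp only [LinearMap.comp_apply] at t4
    rw [t4]
    rw [show (TensorProduct.map (δH k H) LinearMap.id (cLM m)) ⊗ₜ[k] (TensorProduct.map LinearMap.id (δH k H) (cRN n))
        = TensorProduct.map (TensorProduct.map (δH k H) LinearMap.id)
            (TensorProduct.map LinearMap.id (δH k H)) (cLM m ⊗ₜ[k] cRN n) from
      (TensorProduct.map_tmul _ _ _ _).symm]
    have t5 := LinearMap.congr_fun
      (tt_nat (k := k) (δH k H) LinearMap.id LinearMap.id (δH k H)) (cLM m ⊗ₜ[k] cRN n)
    simp only [LinearMap.comp_apply] at t5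
    rw [← t5]
    have hQ' : TensorProduct.map (aLN ∘ₗ TensorProduct.map (μH k H ∘ₗ TensorProduct.map LinearMap.id T ∘ₗ sw k H H) LinearMap.id) (aRM ∘ₗ TensorProduct.map LinearMap.id (μH k H ∘ₗ TensorProduct.map T LinearMap.id ∘ₗ sw k H H))
          ∘ₗ TensorProduct.map (TensorProduct.map (δH k H) LinearMap.id)
              (TensorProduct.map LinearMap.id (δH k H))
        = TensorProduct.map ((TensorProduct.lid k N).toLinearMap ∘ₗ TensorProduct.map (εH k H) LinearMap.id) ((TensorProduct.rid k M).toLinearMap ∘ₗ TensorProduct.map LinearMap.id (εH k H)) := by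
      rw [← TensorProduct.map_comp, SC, SD]
    have t6 := LinearMap.congr_fun hQ' (tt k H M N H (cLM m ⊗ₜ[k] cRN n))
    simp only [LinearMap.comp_apply] at t6
    rw [t6]
    have t7 := LinearMap.congr_fun Cfin (cLM m ⊗ₜ[k] cRN n)
    simp only [LinearMap.comp_apply] at t7
    rw [t7]
    rw [show TensorProduct.map ((TensorProduct.lid k M).toLinearMap ∘ₗ TensorProduct.map (εH k H) LinearMap.id) ((TensorProduct.rid k N).toLinearMap ∘ₗ TensorProduct.map LinearMap.id (εH k H)) (cLM m ⊗ₜ[k] cRN n) = ((TensorProduct.lid k M).toLinearMap ∘ₗ TensorProduct.map (εH k H) LinearMap.id) (cLM m) ⊗ₜ[k] ((TensorProduct.rid k N).toLinearMap ∘ₗ TensorProduct.map LinearMap.id (εH k H)) (cRN n) from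
      TensorProduct.map_tmul _ _ _ _]
    rw [finM, finN]
    simp [sw]
  have inv1 : ∀ x : M ⊗[k] N,
      braidInv H T cLM aRM aLN cRN (braid k H cLM aRM aLN cRN x) = x := by
    have hmap : braidInv H T cLM aRM aLN cRN ∘ₗ braid k H cLM aRM aLN cRN = LinearMap.id := by
      apply TensorProduct.ext'
      intro m n
      simpa using dir1 m n
    intro x
    simpa using LinearMap.congr_fun hmap x
  have inv2 : ∀ y : N ⊗[k] M,
      braid k H cLM aRM aLN cRN (braidInv H T cLM aRM aLN cRN y) = y := by
    have hmap : braid k H cLM aRM aLN cRN ∘ₗ braidInv H T cLM aRM aLN cRN = LinearMap.id := by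
      apply TensorProduct.ext'
      intro n m
      simpa using dir2 n m
    intro y
    simpa using LinearMap.congr_fun hmap y
  exact ⟨⟨Function.LeftInverse.injective inv1, Function.RightInverse.surjective inv2⟩, inv1, inv2⟩


end LRPaper
end
end
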